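/- arXiv:2507.16138 — 3 statements merged into one kernel-verified Lean document; each statement's English description precedes it below -/
import Mathlib

section
/- For n ≥ 2, viewing the discriminant D_n of the generic polynomial f(x) = ∑_{i=0}^n a_i x^i as a polynomial in the single variable a_0 (with the other coefficients as parameters), its degree in a_0 is exactly n - 1, and the coefficient of a_0^{n-1} is (-1)^{n(n-1)/2} n^n a_n^{n-1}. -/
open MvPolynomial

/-- The Sylvester matrix of the polynomial `f = ∑_{i=0}^n a i * x^i` (of formal degree `n`)
and its derivative `f'`; its determinant is the resultant `Res(f, f')`.  The first `n - 1`
rows contain the shifted coefficient sequences `a_n, …, a_0` of `f`, and the last `n` rows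
contain the shifted coefficient sequences `n·a_n, …, 1·a_1` of `f'`. -/
noncomputable def sylv {R : Type*} [CommRing R] (n : ℕ) (a : ℕ → R) :
    Matrix (Fin (2 * n - 1)) (Fin (2 * n - 1)) R :=
  Matrix.of fun i j =>
    if (i : ℕ) < n - 1 then
      (if (i : ℕ) ≤ (j : ℕ) ∧ (j : ℕ) ≤ (i : ℕ) + n then a (n - ((j : ℕ) - (i : ℕ))) else 0)
    else
      (if (i : ℕ) - (n - 1) ≤ (j : ℕ) ∧ (j : ℕ) < (i : ℕ) - (n - 1) + n then
        (n - ((j : ℕ) - ((i : ℕ) - (n - 1)))) • a (n - ((j : ℕ) - ((i : ℕ) - (n - 1))))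
      else 0)

namespace Stmt4Aux

local notation "R" => MvPolynomial ℕ ℤ

lemma finRotate_pow_apply (m k : ℕ) (i : Fin (m+1)) :
    (((finRotate (m+1))^k) i : ℕ) = ((i:ℕ) + k) % (m+1) := by
  induction k with
  | zero => simp [Nat.mod_eq_of_lt i.isLt]
  | succ k ih =>
    rw [pow_succ', Equiv.Perm.mul_apply, finRotate_succ_apply, Fin.val_add, ih,
      Fin.val_one', ← Nat.add_mod, ← Nat.add_assoc]

lemma sign_finRotate_pow (m k : ℕ) (hm : Even m) :
    Equiv.Perm.sign ((finRotate (m+1))^k) = 1 := by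
  rw [map_pow, sign_finRotate, Nat.add_sub_cancel, hm.neg_one_pow, one_pow]

noncomputable def Nmat (n : ℕ) : Matrix (Fin (2*n-1)) (Fin (2*n-1)) R :=
  Matrix.of fun i j =>
    if (i : ℕ) < n - 1 then (if (j : ℕ) = (i : ℕ) + n then 1 else 0)
    else sylv n X i j

lemma prod_ite_lt {M : Type*} [CommMonoid M] (m t : ℕ) (ht : t ≤ m) (x : M) :
    (∏ i : Fin m, if (i : ℕ) < t then x else 1) = x ^ t := by
  rw [Fin.prod_univ_eq_prod_range (fun i => if i < t then x else 1) m]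
  rw [← Finset.prod_subset (Finset.range_subset_range.2 ht)
    (fun j _ hj2 => if_neg (fun hlt => hj2 (Finset.mem_range.2 hlt)))]
  rw [Finset.prod_congr rfl (fun j hj => if_pos (Finset.mem_range.1 hj)),
    Finset.prod_const, Finset.card_range]

lemma detN_aux (n m : ℕ) (hn : 2 ≤ n) (hm : m + 1 = 2*n - 1)
    (A : Matrix (Fin (m+1)) (Fin (m+1)) R)
    (hA : ∀ i j : Fin (m+1), A i j = Nmat n (Fin.cast hm i) (Fin.cast hm j)) :
    A.det = ((n:ℕ) • (X n : R))^n := by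
  have hm2 : m = 2*n-2 := by omega
  set ρ : Equiv.Perm (Fin (m+1)) := (finRotate (m+1))^(n-1) with hρ
  have hρval : ∀ i : Fin (m+1), ((ρ i : ℕ)) = ((i:ℕ) + (n-1)) % (m+1) :=
    fun i => finRotate_pow_apply m (n-1) i
  have hsign : Equiv.Perm.sign ρ = 1 :=
    sign_finRotate_pow m (n-1) ⟨n-1, by omega⟩
  have hval : ∀ i : Fin (m+1), (i:ℕ) < n → ((ρ i : ℕ)) = (i:ℕ) + (n-1) := by
    intro i hi; rw [hρval]; exact Nat.mod_eq_of_lt (by omega)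
  have hval2 : ∀ i : Fin (m+1), n ≤ (i:ℕ) → ((ρ i : ℕ)) = (i:ℕ) - n := by
    intro i hi
    have h1 : (i:ℕ) < m+1 := i.isLt
    rw [hρval]
    have h2 : (i:ℕ) + (n-1) = ((i:ℕ) - n) + 1 * (m+1) := by omega
    rw [h2, Nat.add_mul_mod_self_right]
    exact Nat.mod_eq_of_lt (by omega)
  have htri : (A.submatrix ρ id).BlockTriangular id := by
    intro i j hij
    have hij' : (j:ℕ) < (i:ℕ) := hij
    have hjlt : (j:ℕ) < m+1 := j.isLt
    have hilt : (i:ℕ) < m+1 := i.isLt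
    simp only [Matrix.submatrix_apply, id_eq]
    rw [hA]
    simp only [Nmat, sylv, Matrix.of_apply, Fin.coe_cast]
    by_cases hi : (i:ℕ) < n
    · simp only [hval i hi]
      rw [if_neg (by omega), if_neg (by omega), if_neg (by omega)]
    · simp only [hval2 i (by omega)]
      rw [if_pos (by omega), if_neg (by omega)]
  have hdet : (A.submatrix ρ id).det = A.det := by
    rw [Matrix.det_permute, hsign]
    simp
  rw [← hdet, Matrix.det_of_upperTriangular htri]
  have hdiag : ∀ i : Fin (m+1), (A.submatrix ρ id) i i
      = if (i:ℕ) < n then ((n:ℕ) • (X n : R)) else 1 := by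
    intro i
    have hilt : (i:ℕ) < m+1 := i.isLt
    simp only [Matrix.submatrix_apply, id_eq]
    rw [hA]
    simp only [Nmat, sylv, Matrix.of_apply, Fin.coe_cast]
    by_cases hi : (i:ℕ) < n
    · simp only [hval i hi]
      rw [if_neg (by omega), if_neg (by omega), if_pos (by omega), if_pos hi]
      have e1 : ((i:ℕ) - ((i:ℕ) + (n - 1) - (n - 1))) = 0 := by omega
      rw [e1, Nat.sub_zero]
    · simp only [hval2 i (by omega)]
      rw [if_pos (by omega), if_pos (by omega), if_neg hi]
  rw [Finset.prod_congr rfl (fun i _ => hdiag i)]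
  exact prod_ite_lt (m+1) n (by omega) _


lemma detN (n : ℕ) (hn : 2 ≤ n) : (Nmat n).det = ((n:ℕ) • (X n : R))^n := by
  have hm : (2*n-2) + 1 = 2*n - 1 := by omega
  have h := detN_aux n (2*n-2) hn hm
      ((Nmat n).submatrix (Fin.cast hm) (Fin.cast hm)) (fun i j => rfl)
  rwa [show ((Nmat n).submatrix (Fin.cast hm) (Fin.cast hm))
      = (Nmat n).submatrix (finCongr hm) (finCongr hm) from rfl,
    Matrix.det_submatrix_equiv_self] at h

lemma degreeOf_det_le {m : ℕ} (A : Matrix (Fin m) (Fin m) R) (d : Fin m → ℕ)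
    (h : ∀ i j, degreeOf 0 (A i j) ≤ d i) :
    degreeOf 0 A.det ≤ ∑ i, d i := by
  rw [Matrix.det_apply]
  refine le_trans (degreeOf_sum_le _ _ _) (Finset.sup_le fun σ _ => ?_)
  have h1 : (Equiv.Perm.sign σ • ∏ i, A (σ i) i : R)
      = C ((Equiv.Perm.sign σ : ℤ)) * ∏ i, A (σ i) i := by
    rw [Units.smul_def, smul_eq_C_mul]
  rw [h1]
  refine le_trans (degreeOf_mul_le _ _ _) ?_
  rw [degreeOf_C, zero_add]
  refine le_trans (degreeOf_prod_le _ _ _) ?_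
  calc ∑ i, degreeOf 0 (A (σ i) i) ≤ ∑ i, d (σ i) :=
        Finset.sum_le_sum fun i _ => h _ _
    _ = ∑ i, d i := Equiv.sum_comp σ d

lemma sum_d (m t k : ℕ) (ht : t ≤ m) (hk : k < t) :
    (∑ i : Fin m, if (i : ℕ) < t ∧ (i : ℕ) ≠ k then 1 else 0) = t - 1 := by
  rw [Fin.sum_univ_eq_sum_range (fun i => if i < t ∧ i ≠ k then 1 else 0) m]
  rw [← Finset.sum_subset (Finset.range_subset_range.2 ht)
    (fun j _ hj2 => if_neg (fun hc => hj2 (Finset.mem_range.2 hc.1)))]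
  have hmem : k ∈ Finset.range t := Finset.mem_range.2 hk
  rw [← Finset.add_sum_erase _ _ hmem, if_neg (by simp)]
  have hcongr : ∀ j ∈ (Finset.range t).erase k,
      (if j < t ∧ j ≠ k then 1 else 0) = 1 := fun j hj =>
    if_pos ⟨Finset.mem_range.1 (Finset.mem_of_mem_erase hj), Finset.ne_of_mem_erase hj⟩
  rw [Finset.sum_congr rfl hcongr, Finset.sum_const, smul_eq_mul, mul_one,
    Finset.card_erase_of_mem hmem, Finset.card_range, zero_add]

lemma det_add_expand {m : ℕ} (A B : Matrix (Fin m) (Fin m) R) :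
    (A + B).det = ∑ s : Finset (Fin m),
      (Matrix.of fun i j => if i ∈ s then A i j else B i j).det := by
  classical
  have h := (@Matrix.detRowAlternating (Fin m) _ _ (MvPolynomial ℕ ℤ) _).toMultilinearMap.map_add_univ A B
  have h2 : ∀ s : Finset (Fin m), (s.piecewise A B)
      = (Matrix.of fun i j => if i ∈ s then A i j else B i j) := by
    intro s
    ext i j
    simp [Finset.piecewise, apply_ite (fun f : Fin m → MvPolynomial ℕ ℤ => f j)]
  simp only [AlternatingMap.coe_multilinearMap] at h
  rw [show ((A + B).det : MvPolynomial ℕ ℤ) = _ from h]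
  exact Finset.sum_congr rfl fun s _ => by rw [h2]; rfl

lemma det_sylv (n : ℕ) (hn : 2 ≤ n) :
    ∃ Q : R, degreeOf 0 Q ≤ n - 2 ∧
      (sylv n X).det = X 0 ^ (n-1) * ((n:R)^n * X n ^ n) + Q := by
  classical
  set A : Matrix (Fin (2*n-1)) (Fin (2*n-1)) R :=
    Matrix.of (fun i j => (if (i:ℕ) < n-1 then (X 0 : R) else 1) * Nmat n i j) with hA
  set B : Matrix (Fin (2*n-1)) (Fin (2*n-1)) R :=
    Matrix.of (fun i j =>
      if (i:ℕ) < n-1 then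
        (if ((i:ℕ) ≤ (j:ℕ) ∧ (j:ℕ) ≤ (i:ℕ) + n) ∧ (j:ℕ) ≠ (i:ℕ) + n
          then X (n - ((j:ℕ) - (i:ℕ))) else 0)
      else 0) with hB
  -- degree facts about entries
  have hA_deg : ∀ r c, degreeOf 0 (A r c) ≤ (if (r:ℕ) < n-1 then 1 else 0) := by
    intro r c
    simp only [hA, Matrix.of_apply, Nmat, sylv]
    by_cases hr : (r:ℕ) < n-1
    · rw [if_pos hr, if_pos hr, if_pos hr]
      refine le_trans (degreeOf_mul_le _ _ _) ?_
      have h1 : degreeOf 0 (X 0 : R) ≤ 1 := by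
        rw [degreeOf_X]; simp
      have h2 : degreeOf 0 (if (c:ℕ) = (r:ℕ) + n then (1:R) else 0) ≤ 0 := by
        split
        · rw [← C_1, degreeOf_C]
        · rw [degreeOf_zero]
      omega
    · rw [if_neg hr, if_neg hr, if_neg hr, one_mul]
      split
      · rw [nsmul_eq_mul]
        refine le_trans (degreeOf_mul_le _ _ _) ?_
        have h1 : degreeOf 0 ((n - ((c:ℕ) - ((r:ℕ) - (n-1))) : ℕ) : R) = 0 := by
          rw [← map_natCast (C : ℤ →+* MvPolynomial ℕ ℤ), degreeOf_C]
        have h2 : degreeOf 0 (X (n - ((c:ℕ) - ((r:ℕ) - (n-1)))) : R) = 0 := by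
          rw [degreeOf_X, if_neg]; omega
        omega
      · simp
  have hB_deg : ∀ r c, degreeOf 0 (B r c) = 0 := by
    intro r c
    simp only [hB, Matrix.of_apply]
    split
    · split
      · rw [degreeOf_X, if_neg]; omega
      · simp
    · simp
  have hM : sylv n (X : ℕ → R) = A + B := by
    refine Matrix.ext fun i j => ?_
    simp only [sylv, Nmat, Matrix.add_apply, Matrix.of_apply, hA, hB]
    by_cases hi : (i:ℕ) < n-1
    · simp only [if_pos hi]
      by_cases hj : (j:ℕ) = (i:ℕ) + n
      · rw [if_pos hj,
          if_pos (show (i:ℕ) ≤ (j:ℕ) ∧ (j:ℕ) ≤ (i:ℕ) + n by omega),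
          if_neg (show ¬(((i:ℕ) ≤ (j:ℕ) ∧ (j:ℕ) ≤ (i:ℕ) + n) ∧ (j:ℕ) ≠ (i:ℕ) + n) from
            fun h => h.2 hj),
          show n - ((j:ℕ) - (i:ℕ)) = 0 by omega, mul_one, add_zero]
      · rw [if_neg hj, mul_zero, zero_add]
        by_cases hc : (i:ℕ) ≤ (j:ℕ) ∧ (j:ℕ) ≤ (i:ℕ) + n
        · rw [if_pos hc, if_pos (show ((i:ℕ) ≤ (j:ℕ) ∧ (j:ℕ) ≤ (i:ℕ) + n) ∧ (j:ℕ) ≠ (i:ℕ) + n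
            from ⟨hc, hj⟩)]
        · rw [if_neg hc, if_neg (show ¬(((i:ℕ) ≤ (j:ℕ) ∧ (j:ℕ) ≤ (i:ℕ) + n) ∧ (j:ℕ) ≠ (i:ℕ) + n)
            from fun h => hc h.1)]
    · simp only [if_neg hi, one_mul, add_zero]
  refine ⟨∑ s ∈ (Finset.univ : Finset (Finset (Fin (2*n-1)))).erase Finset.univ,
      (Matrix.of fun i j => if i ∈ s then A i j else B i j).det, ?_, ?_⟩
  · refine le_trans (degreeOf_sum_le _ _ _) (Finset.sup_le fun s hs => ?_)
    obtain ⟨i, hi⟩ : ∃ i, i ∉ s := by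
      by_contra h
      push_neg at h
      exact (Finset.ne_of_mem_erase hs) (Finset.eq_univ_iff_forall.2 h)
    by_cases hi' : (i:ℕ) < n - 1
    · have hd := degreeOf_det_le (Matrix.of fun r c => if r ∈ s then A r c else B r c)
        (fun r => if (r:ℕ) < n-1 ∧ (r:ℕ) ≠ (i:ℕ) then 1 else 0) ?_
      · refine le_trans hd ?_
        rw [sum_d (2*n-1) (n-1) (i:ℕ) (by omega) hi']
        omega
      · intro r c
        simp only [Matrix.of_apply]
        by_cases hrs : r ∈ s
        · rw [if_pos hrs]
          have hri : (r:ℕ) ≠ (i:ℕ) := by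
            intro h
            have hri2 : r = i := Fin.ext h
            exact hi (hri2 ▸ hrs)
          by_cases hr : (r:ℕ) < n-1
          · rw [if_pos ⟨hr, hri⟩]
            exact le_trans (hA_deg r c) (by rw [if_pos hr])
          · refine le_trans (hA_deg r c) ?_
            rw [if_neg hr]
            omega
        · rw [if_neg hrs, hB_deg r c]
          omega
    · have hzero : (Matrix.of fun r c => if r ∈ s then A r c else B r c).det = 0 := by
        apply Matrix.det_eq_zero_of_row_eq_zero i
        intro j
        simp only [Matrix.of_apply, if_neg hi, hB, if_neg hi']
      rw [hzero, degreeOf_zero]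
      omega
  · rw [hM, det_add_expand A B,
      ← Finset.add_sum_erase _ _ (Finset.mem_univ (Finset.univ : Finset (Fin (2*n-1))))]
    congr 1
    have huniv : (Matrix.of fun i j =>
        if i ∈ (Finset.univ : Finset (Fin (2*n-1))) then A i j else B i j) = A := by
      ext i j; simp
    rw [huniv, hA,
      Matrix.det_mul_column (fun i : Fin (2*n-1) => if (i:ℕ) < n-1 then (X 0:R) else 1) (Nmat n),
      detN n hn, prod_ite_lt (2*n-1) (n-1) (by omega) (X 0 : R), nsmul_eq_mul, mul_pow]

end Stmt4Aux

/-- For `n ≥ 2`, the discriminant `D_n` of the generic polynomial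
`f = ∑_{i=0}^n a_i x^i`, viewed as a polynomial in `a_0`, has degree exactly `n - 1`
in `a_0`, and the coefficient of `a_0^(n-1)` is `(-1)^(n(n-1)/2) n^n a_n^(n-1)`:
every monomial of `D_n` containing `a_0^(n-1)` agrees with the corresponding monomial of
`(-1)^(n(n-1)/2) n^n a_n^(n-1) a_0^(n-1)`. -/
theorem stmt4 (n : ℕ) (hn : 2 ≤ n) (D : MvPolynomial ℕ ℤ)
    (hD : X n * D = (-1) ^ (n * (n - 1) / 2) * (sylv n X).det) :
    D.degreeOf 0 = n - 1 ∧
      ∀ e : ℕ →₀ ℕ, e 0 = n - 1 →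
        D.coeff e =
          ((-1) ^ (n * (n - 1) / 2) * (n : MvPolynomial ℕ ℤ) ^ n *
            X n ^ (n - 1) * X 0 ^ (n - 1)).coeff e := by
  classical
  obtain ⟨Q, hQdeg, hdet⟩ := Stmt4Aux.det_sylv n hn
  set c : MvPolynomial ℕ ℤ := (-1) ^ (n * (n - 1) / 2) with hc
  set E : MvPolynomial ℕ ℤ := c * (n : MvPolynomial ℕ ℤ) ^ n * X n ^ (n - 1) * X 0 ^ (n - 1)
    with hE
  have h0n : (0:ℕ) ≠ n := by omega
  have hpow : (X n : MvPolynomial ℕ ℤ) * X n ^ (n-1) = X n ^ n := by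
    rw [← pow_succ']
    congr 1
    omega
  have hXnE : X n * E = c * (X 0 ^ (n-1) * ((n : MvPolynomial ℕ ℤ)^n * X n ^ n)) := by
    rw [hE, ← hpow]; ring
  have hF : X n * (D - E) = c * Q := by
    rw [mul_sub, hD, hdet, hXnE, mul_add]
    ring
  have hcC : c = C ((-1:ℤ) ^ (n * (n-1) / 2)) := by
    rw [hc, map_pow, map_neg, map_one]
  have hcdeg : degreeOf 0 c = 0 := by rw [hcC, degreeOf_C]
  have hFdeg : degreeOf 0 (D - E) ≤ n - 2 := by
    rw [← degreeOf_mul_X_of_ne (D - E) h0n, mul_comm, hF]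
    refine le_trans (degreeOf_mul_le _ _ _) ?_
    rw [hcdeg, zero_add]
    exact hQdeg
  have hcoeffF : ∀ e : ℕ →₀ ℕ, e 0 = n - 1 → coeff e (D - E) = 0 := by
    intro e he
    by_contra hne
    have hmem : e ∈ (D - E).support := mem_support_iff.2 hne
    have := (degreeOf_lt_iff (show 0 < n-1 by omega)).1
      (lt_of_le_of_lt hFdeg (show n-2 < n-1 by omega)) e hmem
    omega
  have hgoal2 : ∀ e : ℕ →₀ ℕ, e 0 = n - 1 → coeff e D = coeff e E := by
    intro e he
    have h := hcoeffF e he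
    rw [coeff_sub] at h
    omega
  have hnn : ((n : MvPolynomial ℕ ℤ))^n = C ((n:ℤ)^n) := by
    rw [map_pow, map_natCast]
  have hEm : E = monomial (Finsupp.single n (n-1) + Finsupp.single 0 (n-1))
      ((-1:ℤ) ^ (n * (n-1) / 2) * (n:ℤ)^n) := by
    rw [hE, hcC, hnn, ← map_mul, X_pow_eq_monomial, X_pow_eq_monomial,
      C_mul_monomial, monomial_mul, mul_one, mul_one]
  have hEcoef : ((-1:ℤ)^(n*(n-1)/2) * (n:ℤ)^n) ≠ 0 := by
    have hn0 : (n:ℤ) ≠ 0 := by exact_mod_cast (show n ≠ 0 by omega)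
    exact mul_ne_zero (pow_ne_zero _ (by norm_num)) (pow_ne_zero _ hn0)
  have hs0 : ((Finsupp.single n (n-1) + Finsupp.single 0 (n-1) : ℕ →₀ ℕ)) 0 = n - 1 := by
    rw [Finsupp.add_apply, Finsupp.single_apply, Finsupp.single_apply,
      if_neg (by omega), if_pos rfl, zero_add]
  have hEdeg : degreeOf 0 E = n - 1 := by
    rw [hEm, degreeOf_monomial_eq _ _ hEcoef, hs0]
  constructor
  · refine le_antisymm ?_ ?_
    · have hDE : D = E + (D - E) := by ring
      have h1 := degreeOf_add_le 0 E (D - E)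
      rw [← hDE] at h1
      exact le_trans h1 (max_le (le_of_eq hEdeg) (le_trans hFdeg (by omega)))
    · have hD_e : coeff (Finsupp.single n (n-1) + Finsupp.single 0 (n-1)) D
          = ((-1:ℤ)^(n*(n-1)/2) * (n:ℤ)^n) := by
        rw [hgoal2 _ hs0, hEm, coeff_monomial, if_pos rfl]
      have hmem : (Finsupp.single n (n-1) + Finsupp.single 0 (n-1)) ∈ D.support := by
        rw [mem_support_iff, hD_e]
        exact hEcoef
      have := monomial_le_degreeOf 0 hmem
      rw [hs0] at this
      exact this
  · exact hgoal2
end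

section
/- For 0 < k < n, the degree of the discriminant D_n of the generic degree-n polynomial in the variable a_k is exactly n, and the coefficient of a_k^n is a nonzero integer multiple of a_n^{n-k-1} a_0^{k-1}; specifically the term of D_n containing a_k^n is (up to sign) k^n a_n^{n-k-1} a_k^n a_0^{k-1} plus other contributions, and its coefficient is nonzero because n has a prime power factor not dividing k. -/
open MvPolynomial

lemma detexp {ι : Type*} [Fintype ι] [DecidableEq ι] {R : Type*} [CommRing R]
    (F : Finset ι) (A B : Matrix ι ι R) (hB : ∀ i, i ∉ F → ∀ j, B i j = 0) :
    (Matrix.of fun i j => Polynomial.C (A i j) + Polynomial.X * Polynomial.C (B i j)).det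
      = ∑ I ∈ F.powerset,
          Polynomial.X ^ I.card *
            Polynomial.C ((Matrix.of fun i j => if i ∈ I then B i j else A i j).det) := by
  classical
  induction F using Finset.induction generalizing A B with
  | empty =>
    simp only [Finset.powerset_empty, Finset.sum_singleton, Finset.card_empty, pow_zero, one_mul]
    have h1 : (Matrix.of fun i j => Polynomial.C (A i j) + Polynomial.X * Polynomial.C (B i j))
        = (Polynomial.C : R →+* Polynomial R).mapMatrix (Matrix.of fun i j => A i j) := by
      ext i j
      simp [hB i (by simp) j]
    rw [h1, ← RingHom.map_det]
    congr 1
  | @insert a F' ha ih =>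
    set M : Matrix ι ι (Polynomial R) :=
      Matrix.of fun i j => Polynomial.C (A i j) + Polynomial.X * Polynomial.C (B i j) with hM
    -- B with row a zeroed
    set B0 : Matrix ι ι R := Matrix.of fun i j => if i = a then 0 else B i j with hB0
    have e1 : M.updateRow a (fun j => Polynomial.C (A a j)) =
        Matrix.of fun i j => Polynomial.C (A i j) + Polynomial.X * Polynomial.C (B0 i j) := by
      ext i j
      by_cases h : i = a <;> simp [h, hM, hB0, Matrix.updateRow_apply]
    -- A with row a replaced by B a
    set A1 : Matrix ι ι R := Matrix.of fun i j => if i = a then B i j else A i j with hA1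
    have e2 : M.updateRow a (fun j => Polynomial.C (B a j)) =
        Matrix.of fun i j => Polynomial.C (A1 i j) + Polynomial.X * Polynomial.C (B0 i j) := by
      ext i j
      by_cases h : i = a <;> simp [h, hM, hB0, hA1, Matrix.updateRow_apply]
    have h2 : M.det = (M.updateRow a (fun j => Polynomial.C (A a j))).det
        + Polynomial.X * (M.updateRow a (fun j => Polynomial.C (B a j))).det := by
      conv_lhs => rw [← Matrix.updateRow_eq_self M a]
      have hMa : M a = (fun j => Polynomial.C (A a j)) + fun j => Polynomial.X * Polynomial.C (B a j) := by
        ext j; simp [hM]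
      rw [hMa, Matrix.det_updateRow_add]
      congr 1
      have : (fun j => Polynomial.X * Polynomial.C (B a j))
          = (Polynomial.X : Polynomial R) • (fun j => Polynomial.C (B a j) : ι → Polynomial R) := by
        funext j; simp [smul_eq_mul]
      rw [this, Matrix.det_updateRow_smul]
    have hB0' : ∀ i, i ∉ F' → ∀ j, B0 i j = 0 := by
      intro i hi j
      by_cases h : i = a <;> simp [hB0, h]
      exact hB i (by simp [h, hi]) j
    rw [h2, e1, e2, ih A B0 hB0', ih A1 B0 hB0', Finset.sum_powerset_insert ha,
      Finset.mul_sum]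
    congr 1
    · apply Finset.sum_congr rfl
      intro I hI
      rw [Finset.mem_powerset] at hI
      have hme : (Matrix.of fun i j => if i ∈ I then B0 i j else A i j)
          = Matrix.of fun i j => if i ∈ I then B i j else A i j := by
        ext i j
        have hia : i ∈ I → i ≠ a := fun h1 h2 => ha (hI (h2 ▸ h1))
        by_cases h : i ∈ I
        · simp [h, hB0, hia h]
        · simp [h]
      rw [hme]
    · apply Finset.sum_congr rfl
      intro I hI
      rw [Finset.mem_powerset] at hI
      have haI : a ∉ I := fun h => ha (hI h)
      rw [← mul_assoc, ← pow_succ', Finset.card_insert_of_notMem haI]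
      have hme : (Matrix.of fun i j => if i ∈ I then B0 i j else A1 i j)
          = Matrix.of fun i j => if i ∈ insert a I then B i j else A i j := by
        ext i j
        have hia : i ∈ I → i ≠ a := fun h1 h2 => ha (hI (h2 ▸ h1))
        by_cases h : i = a
        · subst h; simp [haI, hA1, hB0]
        · by_cases h2 : i ∈ I <;> simp [h, h2, hA1, hB0, Finset.mem_insert]
      rw [hme]

noncomputable def phi (k : ℕ) : MvPolynomial ℕ ℤ →+* Polynomial (MvPolynomial ℕ ℤ) :=
  MvPolynomial.eval₂Hom ((Polynomial.C).comp (MvPolynomial.C))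
    (fun i => if i = k then Polynomial.X else Polynomial.C (MvPolynomial.X i))

lemma phi_C (k : ℕ) (a : ℤ) : phi k (MvPolynomial.C a) = Polynomial.C (MvPolynomial.C a) := by
  simp [phi]

lemma phi_X_self (k : ℕ) : phi k (X k) = Polynomial.X := by
  simp [phi]

lemma phi_X_ne (k v : ℕ) (h : v ≠ k) : phi k (X v) = Polynomial.C (MvPolynomial.X v) := by
  simp [phi, h]

lemma phi_monomial (k : ℕ) (u : ℕ →₀ ℕ) (c : ℤ) :
    phi k (monomial u c) =
      Polynomial.C (monomial (u.erase k) c) * Polynomial.X ^ (u k) := by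
  rw [phi, eval₂Hom_monomial]
  have h1 : u = u.erase k + Finsupp.single k (u k) := (Finsupp.erase_add_single k u).symm
  conv_lhs => rw [h1]
  rw [Finsupp.prod_add_index' (by intro i; simp) (by intro i a b; rw [pow_add])]
  rw [Finsupp.prod_single_index (by simp), if_pos rfl]
  have h2 : ((u.erase k).prod fun i e => (if i = k then Polynomial.X
      else Polynomial.C (MvPolynomial.X i)) ^ e)
      = Polynomial.C ((u.erase k).prod fun i e => (MvPolynomial.X i : MvPolynomial ℕ ℤ) ^ e) := by
    rw [Finsupp.prod, Finsupp.prod, map_prod]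
    apply Finset.prod_congr rfl
    intro i hi
    have : i ≠ k := by
      intro h; rw [h] at hi; simp [Finsupp.support_erase] at hi
    rw [if_neg this, map_pow]
  rw [h2, MvPolynomial.monomial_eq, RingHom.comp_apply, map_mul, mul_assoc]

lemma phi_coeff (k : ℕ) (p : MvPolynomial ℕ ℤ) (m : ℕ) (e : ℕ →₀ ℕ) (he : e k = 0) :
    MvPolynomial.coeff e ((phi k p).coeff m) = MvPolynomial.coeff (e + Finsupp.single k m) p := by
  conv_lhs => rw [p.as_sum]
  rw [map_sum, Polynomial.finset_sum_coeff, MvPolynomial.coeff_sum]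
  have hterm : ∀ u ∈ p.support,
      MvPolynomial.coeff e ((phi k (monomial u (coeff u p))).coeff m)
        = if u = e + Finsupp.single k m then coeff u p else 0 := by
    intro u _
    rw [phi_monomial, Polynomial.coeff_C_mul, Polynomial.coeff_X_pow, mul_ite, mul_one, mul_zero,
      apply_ite (MvPolynomial.coeff e), MvPolynomial.coeff_monomial, MvPolynomial.coeff_zero]
    have hee : e.erase k = e := by
      ext a
      rw [Finsupp.erase_apply]
      split
      · next h => rw [h]; exact he.symm
      · rfl
    by_cases hm : m = u k
    · rw [if_pos hm]
      by_cases h2 : Finsupp.erase k u = e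
      · rw [if_pos h2, if_pos]
        rw [← h2, hm]
        exact (Finsupp.erase_add_single k u).symm
      · rw [if_neg h2, if_neg]
        intro h3
        apply h2
        rw [h3, Finsupp.erase_add, Finsupp.erase_single, add_zero, hee]
    · rw [if_neg hm, if_neg]
      intro h3
      apply hm
      rw [h3]
      simp [he]
  rw [Finset.sum_congr rfl hterm, Finset.sum_ite_eq' p.support _ (fun u => coeff u p)]
  split
  · rfl
  · next h => exact (MvPolynomial.notMem_support_iff.mp h).symm
lemma nsmul_C_mul (m : ℕ) (x : MvPolynomial ℕ ℤ) :
    m • x = MvPolynomial.C (m : ℤ) * x := by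
  rw [nsmul_eq_mul]; simp

/-- The Sylvester matrix after the row operations `f'row t ← f'row t - k · frow t`. -/
noncomputable def Sp (n k : ℕ) : Matrix (Fin (2*n-1)) (Fin (2*n-1)) (MvPolynomial ℕ ℤ) :=
  Matrix.of fun i j =>
    if (i : ℕ) < n - 1 then
      (if (i : ℕ) ≤ (j : ℕ) ∧ (j : ℕ) ≤ (i : ℕ) + n then X (n - ((j : ℕ) - (i : ℕ))) else 0)
    else if (i : ℕ) < 2*n - 2 then
      (if (i : ℕ) - (n - 1) ≤ (j : ℕ) ∧ (j : ℕ) ≤ (i : ℕ) - (n - 1) + n then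
        MvPolynomial.C (((n - ((j : ℕ) - ((i : ℕ) - (n - 1))) : ℕ) : ℤ) - (k : ℤ)) *
          X (n - ((j : ℕ) - ((i : ℕ) - (n - 1))))
      else 0)
    else
      (if (i : ℕ) - (n - 1) ≤ (j : ℕ) ∧ (j : ℕ) < (i : ℕ) - (n - 1) + n then
        (n - ((j : ℕ) - ((i : ℕ) - (n - 1)))) • X (n - ((j : ℕ) - ((i : ℕ) - (n - 1))))
      else 0)

/-- Lower unitriangular matrix implementing the row operations. -/
noncomputable def LM (n k : ℕ) : Matrix (Fin (2*n-1)) (Fin (2*n-1)) (MvPolynomial ℕ ℤ) :=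
  Matrix.of fun i j =>
    if i = j then 1
    else if (i : ℕ) = (j : ℕ) + (n - 1) ∧ (j : ℕ) < n - 1 then MvPolynomial.C (-(k : ℤ)) else 0

lemma det_LM (n k : ℕ) : (LM n k).det = 1 := by
  have h : (LM n k).BlockTriangular OrderDual.toDual := by
    intro i j hij
    have hij' : i < j := hij
    have h1 : i ≠ j := ne_of_lt hij'
    have h2 : ¬ ((i : ℕ) = (j : ℕ) + (n - 1) ∧ (j : ℕ) < n - 1) := by
      have : (i : ℕ) < (j : ℕ) := hij'
      omega
    simp [LM, h1, h2]
  rw [Matrix.det_of_lowerTriangular _ h]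
  apply Finset.prod_eq_one
  intro i _
  simp [LM]

lemma LM_mul (n k : ℕ) (hn : 2 ≤ n) (hkn : k < n) :
    LM n k * sylv n X = Sp n k := by
  ext i j
  rw [Matrix.mul_apply]
  by_cases hi1 : (i : ℕ) < n - 1
  -- f-rows: unchanged
  · have hpt : ∀ m : Fin (2*n-1), LM n k i m * sylv n X m j
        = if m = i then sylv n X i j else 0 := by
      intro m
      by_cases hm : m = i
      · rw [hm, if_pos rfl]; simp [LM]
      · have h1 : i ≠ m := fun h => hm h.symm
        have h2 : ¬ ((i : ℕ) = (m : ℕ) + (n - 1) ∧ (m : ℕ) < n - 1) := by omega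
        simp [LM, h1, h2, hm]
    rw [Finset.sum_congr rfl (fun m _ => hpt m), Finset.sum_ite_eq' Finset.univ i
      (fun _ => sylv n X i j)]
    simp only [Finset.mem_univ, if_pos]
    simp only [sylv, Sp, Matrix.of_apply, if_pos hi1]
  by_cases hi2 : (i : ℕ) < 2*n - 2
  -- middle f'-rows
  · have hi0lt : (i : ℕ) - (n-1) < 2*n-1 := by omega
    have hpt : ∀ m : Fin (2*n-1), LM n k i m * sylv n X m j
        = (if m = i then sylv n X i j else 0)
          + (if m = (⟨(i : ℕ) - (n-1), hi0lt⟩ : Fin (2*n-1)) then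
              MvPolynomial.C (-(k:ℤ)) * sylv n X ⟨(i : ℕ) - (n-1), hi0lt⟩ j else 0) := by
      intro m
      have hii0 : i ≠ (⟨(i : ℕ) - (n-1), hi0lt⟩ : Fin (2*n-1)) := by
        intro h
        have := congrArg Fin.val h
        simp only at this
        omega
      by_cases hm : m = i
      · rw [hm, if_pos rfl, if_neg hii0]
        simp [LM]
      · by_cases hm0 : m = (⟨(i : ℕ) - (n-1), hi0lt⟩ : Fin (2*n-1))
        · rw [if_neg hm, if_pos hm0, hm0]
          have h1 : i ≠ (⟨(i : ℕ) - (n-1), hi0lt⟩ : Fin (2*n-1)) := hii0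
          have h2 : (i : ℕ) = (((⟨(i : ℕ) - (n-1), hi0lt⟩ : Fin (2*n-1))) : ℕ) + (n - 1)
              ∧ ((⟨(i : ℕ) - (n-1), hi0lt⟩ : Fin (2*n-1)) : ℕ) < n - 1 := by
            constructor <;> simp <;> omega
          rw [LM, Matrix.of_apply, if_neg h1, if_pos h2, zero_add]
        · have h1 : i ≠ m := fun h => hm h.symm
          have h2 : ¬ ((i : ℕ) = (m : ℕ) + (n - 1) ∧ (m : ℕ) < n - 1) := by
            intro ⟨ha, hb⟩
            apply hm0
            apply Fin.ext
            simp only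
            omega
          simp [LM, h1, h2, hm, hm0]
    rw [Finset.sum_congr rfl (fun m _ => hpt m), Finset.sum_add_distrib,
      Finset.sum_ite_eq' Finset.univ i (fun _ => sylv n X i j),
      Finset.sum_ite_eq' Finset.univ (⟨(i : ℕ) - (n-1), hi0lt⟩ : Fin (2*n-1))
        (fun _ => MvPolynomial.C (-(k:ℤ)) * sylv n X ⟨(i : ℕ) - (n-1), hi0lt⟩ j)]
    simp only [Finset.mem_univ, if_pos]
    -- now compute the entry
    have hni1 : ¬ ((i : ℕ) < n - 1) := hi1
    have hi0lt' : ((⟨(i : ℕ) - (n-1), hi0lt⟩ : Fin (2*n-1)) : ℕ) < n - 1 := by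
      simp only
      omega
    simp only [sylv, Sp, Matrix.of_apply, if_neg hni1, if_pos hi0lt', if_pos hi2]
    by_cases hb1 : (i : ℕ) - (n-1) ≤ (j : ℕ)
    · by_cases hb2 : (j : ℕ) ≤ (i : ℕ) - (n-1) + n
      · by_cases hb3 : (j : ℕ) < (i : ℕ) - (n-1) + n
        · rw [if_pos ⟨hb1, hb3⟩, if_pos ⟨hb1, hb2⟩, if_pos ⟨hb1, hb2⟩, nsmul_C_mul,
            ← add_mul, ← MvPolynomial.C_add, sub_eq_add_neg]
        · -- j = t + n
          have hj : (j : ℕ) - ((i : ℕ) - (n-1)) = n := by omega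
          rw [if_neg (fun h => hb3 h.2), if_pos ⟨hb1, hb2⟩, if_pos ⟨hb1, hb2⟩, hj, zero_add]
          simp only [Nat.sub_self, Nat.cast_zero, zero_sub]
      · have hb3 : ¬ ((j : ℕ) < (i : ℕ) - (n-1) + n) := by omega
        rw [if_neg (fun h => hb3 h.2), if_neg (fun h => hb2 h.2), if_neg (fun h => hb2 h.2)]
        ring
    · rw [if_neg (fun h => hb1 h.1), if_neg (fun h => hb1 h.1), if_neg (fun h => hb1 h.1)]
      ring
  -- last row: unchanged
  · have hpt : ∀ m : Fin (2*n-1), LM n k i m * sylv n X m j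
        = if m = i then sylv n X i j else 0 := by
      intro m
      by_cases hm : m = i
      · rw [hm, if_pos rfl]; simp [LM]
      · have h1 : i ≠ m := fun h => hm h.symm
        have h2 : ¬ ((i : ℕ) = (m : ℕ) + (n - 1) ∧ (m : ℕ) < n - 1) := by
          have : (i : ℕ) < 2*n-1 := i.isLt
          omega
        simp [LM, h1, h2, hm]
    rw [Finset.sum_congr rfl (fun m _ => hpt m), Finset.sum_ite_eq' Finset.univ i
      (fun _ => sylv n X i j)]
    simp only [Finset.mem_univ, if_pos]
    simp only [sylv, Sp, Matrix.of_apply, if_neg hi1, if_neg hi2]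

lemma det_Sp (n k : ℕ) (hn : 2 ≤ n) (hkn : k < n) :
    (Sp n k).det = (sylv n X).det := by
  rw [← LM_mul n k hn hkn, Matrix.det_mul, det_LM n k, one_mul]
def kposP (n k i j : ℕ) : Prop :=
  (i < n-1 ∧ j = i + (n-k)) ∨ (i = 2*n-2 ∧ j = 2*n-1-k)
instance (n k i j : ℕ) : Decidable (kposP n k i j) := by unfold kposP; infer_instance

noncomputable def AM (n k : ℕ) : Matrix (Fin (2*n-1)) (Fin (2*n-1)) (MvPolynomial ℕ ℤ) :=
  Matrix.of fun i j => if kposP n k i j then 0 else Sp n k i j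

noncomputable def BM (n k : ℕ) : Matrix (Fin (2*n-1)) (Fin (2*n-1)) (MvPolynomial ℕ ℤ) :=
  Matrix.of fun i j =>
    if kposP n k (i : ℕ) (j : ℕ) then
      (if (i : ℕ) < n-1 then 1 else MvPolynomial.C (k : ℤ)) else 0

def FF (n : ℕ) : Finset (Fin (2*n-1)) :=
  Finset.univ.filter (fun i => (i : ℕ) < n-1 ∨ (i : ℕ) = 2*n-2)

def gfun (n k i : ℕ) : ℕ :=
  if i < n-1 then i + (n-k)
  else if i = 2*n-2 then 2*n-1 - k
  else if i - (n-1) < n-k then i - (n-1)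
  else i - (n-1) + n

noncomputable def sigma0 (n k : ℕ) (hn : 2 ≤ n) (hk0 : 0 < k) (hkn : k < n) : Equiv.Perm (Fin (2*n-1)) :=
  Equiv.ofBijective
    (fun i => ⟨gfun n k i, by
      have := i.isLt
      unfold gfun
      split_ifs <;> omega⟩)
    (by
      apply Finite.injective_iff_bijective.mp
      intro a b hab
      have h1 := congrArg Fin.val hab
      simp only at h1
      have ha := a.isLt
      have hb := b.isLt
      apply Fin.ext
      unfold gfun at h1
      split_ifs at h1 <;> omega)

lemma sigma0_apply (n k : ℕ) (hn : 2 ≤ n) (hk0 : 0 < k) (hkn : k < n) (i : Fin (2*n-1)) :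
    ((sigma0 n k hn hk0 hkn i : Fin (2*n-1)) : ℕ) = gfun n k (i : ℕ) := rfl

noncomputable def M0 (n k : ℕ) : Matrix (Fin (2*n-1)) (Fin (2*n-1)) (MvPolynomial ℕ ℤ) :=
  Matrix.of fun i j => if i ∈ FF n then BM n k i j else AM n k i j

section
variable {n k : ℕ} (hn : 2 ≤ n) (hk0 : 0 < k) (hkn : k < n)

include hn hk0 hkn in
lemma M0_supp (i j : Fin (2*n-1)) (h : M0 n k i j ≠ 0) :
    ((i:ℕ) < n-1 ∧ (j:ℕ) = (i:ℕ) + (n-k)) ∨ ((i:ℕ) = 2*n-2 ∧ (j:ℕ) = 2*n-1-k) ∨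
    (n-1 ≤ (i:ℕ) ∧ (i:ℕ) < 2*n-2 ∧ (i:ℕ)-(n-1) ≤ (j:ℕ) ∧ (j:ℕ) ≤ (i:ℕ)-(n-1)+n ∧
      (j:ℕ) - ((i:ℕ)-(n-1)) ≠ n-k) := by
  have hilt : (i : ℕ) < 2*n-1 := i.isLt
  have hjlt : (j : ℕ) < 2*n-1 := j.isLt
  by_cases hFF : i ∈ FF n
  · have hm : (i:ℕ) < n-1 ∨ (i:ℕ) = 2*n-2 := by
      simpa [FF] using hFF
    simp only [M0, Matrix.of_apply, if_pos hFF, BM] at h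
    by_cases hp : kposP n k (i:ℕ) (j:ℕ)
    · rcases hp with ⟨h1, h2⟩ | ⟨h1, h2⟩
      · exact Or.inl ⟨h1, h2⟩
      · exact Or.inr (Or.inl ⟨h1, h2⟩)
    · rw [if_neg hp] at h
      exact absurd rfl h
  · have hm : ¬ ((i:ℕ) < n-1 ∨ (i:ℕ) = 2*n-2) := by
      simpa [FF] using hFF
    push_neg at hm
    have hmid : n-1 ≤ (i:ℕ) ∧ (i:ℕ) < 2*n-2 := by omega
    simp only [M0, Matrix.of_apply, if_neg hFF, AM] at h
    by_cases hp : kposP n k (i:ℕ) (j:ℕ)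
    · rw [if_pos hp] at h
      exact absurd rfl h
    · rw [if_neg hp] at h
      simp only [Sp, Matrix.of_apply, if_neg (by omega : ¬ ((i:ℕ) < n-1)),
        if_pos hmid.2] at h
      by_cases hb : (i:ℕ) - (n-1) ≤ (j:ℕ) ∧ (j:ℕ) ≤ (i:ℕ) - (n-1) + n
      · by_cases hd : (j:ℕ) - ((i:ℕ)-(n-1)) = n-k
        · exfalso
          apply h
          rw [if_pos hb]
          have hz : (((n - ((j : ℕ) - ((i : ℕ) - (n - 1))) : ℕ) : ℤ) - (k : ℤ)) = 0 := by
            omega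
          rw [hz, map_zero, zero_mul]
        · exact Or.inr (Or.inr ⟨hmid.1, hmid.2, hb.1, hb.2, hd⟩)
      · rw [if_neg hb] at h
        exact absurd rfl h

include hn hk0 hkn in
lemma force (σ : Equiv.Perm (Fin (2*n-1))) (h : ∀ i, M0 n k i (σ i) ≠ 0) :
    σ = sigma0 n k hn hk0 hkn := by
  have key := fun i => M0_supp hn hk0 hkn i (σ i) (h i)
  have low : ∀ j, ∀ _ : j < n-k, ((σ ⟨n-1+j, by omega⟩ : Fin (2*n-1)) : ℕ) = j := by
    intro j
    induction j using Nat.strong_induction_on with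
    | _ j IH =>
      intro hj
      obtain ⟨i, hi⟩ := σ.surjective ⟨j, by omega⟩
      have hv : ((σ i : Fin (2*n-1)) : ℕ) = j := by rw [hi]
      rcases key i with ⟨f1, f2⟩ | ⟨f1, f2⟩ | ⟨f1, f2, f3, f4, f5⟩
      · omega
      · omega
      · have ht : (i:ℕ) - (n-1) = j := by
          by_contra hne
          have htlt : (i:ℕ) - (n-1) < j := by omega
          have := IH ((i:ℕ) - (n-1)) htlt (by omega)
          have hieq : (⟨n-1+((i:ℕ)-(n-1)), by omega⟩ : Fin (2*n-1)) = i := by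
            apply Fin.ext; simp; omega
          rw [hieq] at this
          omega
        have hieq : i = (⟨n-1+j, by omega⟩ : Fin (2*n-1)) := by
          apply Fin.ext; simp; omega
        rw [← hieq, hv]
  have high : ∀ d j, ∀ _ : 2*n-2 - j = d, ∀ _ : 2*n-k ≤ j, ∀ _ : j ≤ 2*n-2,
      ((σ ⟨n-1+(j-n), by omega⟩ : Fin (2*n-1)) : ℕ) = j := by
    intro d
    induction d using Nat.strong_induction_on with
    | _ d IH =>
      intro j hd hj1 hj2
      obtain ⟨i, hi⟩ := σ.surjective ⟨j, by omega⟩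
      have hv : ((σ i : Fin (2*n-1)) : ℕ) = j := by rw [hi]
      rcases key i with ⟨f1, f2⟩ | ⟨f1, f2⟩ | ⟨f1, f2, f3, f4, f5⟩
      · omega
      · omega
      · have ht : (i:ℕ) - (n-1) = j - n := by
          by_contra hne
          have htgt : j - n < (i:ℕ) - (n-1) := by omega
          set j' := (i:ℕ) - (n-1) + n with hj'
          have := IH (2*n-2-j') (by omega) j' rfl (by omega) (by omega)
          have hieq : (⟨n-1+(j'-n), by omega⟩ : Fin (2*n-1)) = i := by
            apply Fin.ext; simp; omega
          rw [hieq] at this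
          omega
        have hieq : i = (⟨n-1+(j-n), by omega⟩ : Fin (2*n-1)) := by
          apply Fin.ext; simp; omega
        rw [← hieq, hv]
  apply Equiv.ext
  intro i
  apply Fin.ext
  rw [sigma0_apply]
  have hilt : (i:ℕ) < 2*n-1 := i.isLt
  rcases key i with ⟨f1, f2⟩ | ⟨f1, f2⟩ | ⟨f1, f2, f3, f4, f5⟩
  · rw [f2]
    unfold gfun
    rw [if_pos f1]
  · rw [f2]
    unfold gfun
    rw [if_neg (by omega), if_pos f1]
  · set t := (i:ℕ) - (n-1) with htdef
    by_cases hlow : t < n-k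
    · have := low t hlow
      have hieq : (⟨n-1+t, by omega⟩ : Fin (2*n-1)) = i := by
        apply Fin.ext; simp; omega
      rw [hieq] at this
      rw [this]
      unfold gfun
      rw [if_neg (by omega), if_neg (by omega), if_pos (by omega)]
    · have := high (2*n-2-(t+n)) (t+n) rfl (by omega) (by omega)
      have hieq : (⟨n-1+(t+n-n), by omega⟩ : Fin (2*n-1)) = i := by
        apply Fin.ext; simp; omega
      rw [hieq] at this
      rw [this]
      unfold gfun
      rw [if_neg (by omega), if_neg (by omega), if_neg (by omega)]
end

section
variable {n k : ℕ} (hn : 2 ≤ n) (hk0 : 0 < k) (hkn : k < n)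

include hn hk0 hkn in
lemma val1 (i : Fin (2*n-1)) (hi : (i:ℕ) < n-1) :
    M0 n k i (sigma0 n k hn hk0 hkn i) = 1 := by
  have hj : ((sigma0 n k hn hk0 hkn i : Fin (2*n-1)) : ℕ) = (i:ℕ) + (n-k) := by
    rw [sigma0_apply]; unfold gfun; rw [if_pos hi]
  have hFF : i ∈ FF n := by simp [FF]; omega
  have hkp : kposP n k (i:ℕ) ((sigma0 n k hn hk0 hkn i : Fin (2*n-1)) : ℕ) :=
    Or.inl ⟨hi, hj⟩
  simp only [M0, Matrix.of_apply, if_pos hFF, BM, if_pos hkp, if_pos hi]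

include hn hk0 hkn in
lemma val2 (i : Fin (2*n-1)) (hi : (i:ℕ) = 2*n-2) :
    M0 n k i (sigma0 n k hn hk0 hkn i) = MvPolynomial.C (k:ℤ) := by
  have hj : ((sigma0 n k hn hk0 hkn i : Fin (2*n-1)) : ℕ) = 2*n-1-k := by
    rw [sigma0_apply]; unfold gfun; rw [if_neg (by omega), if_pos hi]
  have hFF : i ∈ FF n := by simp [FF]; omega
  have hkp : kposP n k (i:ℕ) ((sigma0 n k hn hk0 hkn i : Fin (2*n-1)) : ℕ) :=
    Or.inr ⟨hi, hj⟩
  simp only [M0, Matrix.of_apply, if_pos hFF, BM, if_pos hkp, if_neg (show ¬ (i:ℕ) < n-1 by omega)]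

include hn hk0 hkn in
lemma M0_mid (i j : Fin (2*n-1)) (h1 : n-1 ≤ (i:ℕ)) (h2 : (i:ℕ) < 2*n-2)
    (hb1 : (i:ℕ)-(n-1) ≤ (j:ℕ)) (hb2 : (j:ℕ) ≤ (i:ℕ)-(n-1)+n)
    (hd : (j:ℕ) - ((i:ℕ)-(n-1)) ≠ n-k) :
    M0 n k i j = MvPolynomial.C (((n - ((j:ℕ) - ((i:ℕ)-(n-1))) : ℕ) : ℤ) - (k:ℤ))
      * X (n - ((j:ℕ) - ((i:ℕ)-(n-1)))) := by
  have hFF : i ∉ FF n := by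
    simp [FF]
    omega
  have hkp : ¬ kposP n k (i:ℕ) (j:ℕ) := by rintro (⟨a,b⟩|⟨a,b⟩) <;> omega
  simp only [M0, AM, Sp, Matrix.of_apply]
  rw [if_neg hFF, if_neg hkp, if_neg (show ¬ (i:ℕ) < n-1 by omega), if_pos h2,
    if_pos ⟨hb1, hb2⟩]

include hn hk0 hkn in
lemma val3 (i : Fin (2*n-1)) (h1 : n-1 ≤ (i:ℕ)) (h2 : (i:ℕ) - (n-1) < n-k) :
    M0 n k i (sigma0 n k hn hk0 hkn i) = MvPolynomial.C ((n:ℤ)-(k:ℤ)) * X n := by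
  have hilt : (i:ℕ) < 2*n-1 := i.isLt
  have hj : ((sigma0 n k hn hk0 hkn i : Fin (2*n-1)) : ℕ) = (i:ℕ) - (n-1) := by
    rw [sigma0_apply]; unfold gfun
    rw [if_neg (by omega), if_neg (by omega), if_pos h2]
  rw [M0_mid hn hk0 hkn i _ h1 (by omega) (by omega) (by omega) (by omega), hj,
    Nat.sub_self, Nat.sub_zero]

include hn hk0 hkn in
lemma val4 (i : Fin (2*n-1)) (h1 : n-1 ≤ (i:ℕ)) (h2 : (i:ℕ) < 2*n-2)
    (h3 : n-k ≤ (i:ℕ) - (n-1)) :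
    M0 n k i (sigma0 n k hn hk0 hkn i) = MvPolynomial.C (-(k:ℤ)) * X 0 := by
  have hilt : (i:ℕ) < 2*n-1 := i.isLt
  have hj : ((sigma0 n k hn hk0 hkn i : Fin (2*n-1)) : ℕ) = (i:ℕ) - (n-1) + n := by
    rw [sigma0_apply]; unfold gfun
    rw [if_neg (by omega), if_neg (by omega), if_neg (by omega)]
  rw [M0_mid hn hk0 hkn i _ h1 h2 (by omega) (by omega) (by omega), hj,
    show (i:ℕ) - (n-1) + n - ((i:ℕ) - (n-1)) = n from by omega, Nat.sub_self]
  norm_num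

include hn hk0 hkn in
lemma prod_M0 : ∏ i : Fin (2*n-1), M0 n k i (sigma0 n k hn hk0 hkn i)
    = (MvPolynomial.C ((n:ℤ)-(k:ℤ)) * X n)^(n-k) * (MvPolynomial.C (-(k:ℤ)) * X 0)^(k-1)
      * MvPolynomial.C (k:ℤ) := by
  classical
  set F0 : ℕ → MvPolynomial ℕ ℤ := fun m =>
    if hlt : m < 2*n-1 then M0 n k ⟨m,hlt⟩ (sigma0 n k hn hk0 hkn ⟨m,hlt⟩) else 1 with hF0
  have hstep : ∀ i : Fin (2*n-1), M0 n k i (sigma0 n k hn hk0 hkn i) = F0 (i:ℕ) := by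
    intro i
    rw [hF0]
    simp only [i.isLt, dif_pos, Fin.eta]
  rw [Finset.prod_congr rfl (fun i _ => hstep i), Fin.prod_univ_eq_prod_range F0 (2*n-1),
    show 2*n-1 = (n-1) + ((n-k) + (k-1)) + 1 by omega, Finset.prod_range_succ,
    Finset.prod_range_add, Finset.prod_range_add]
  have hp1 : ∏ x ∈ Finset.range (n-1), F0 x = 1 := by
    apply Finset.prod_eq_one
    intro x hx
    rw [Finset.mem_range] at hx
    simp only [hF0]
    rw [dif_pos (show x < 2*n-1 by omega)]
    exact val1 hn hk0 hkn _ (by simp only [Fin.val_mk]; omega)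
  have hp2 : ∏ x ∈ Finset.range (n-k), F0 ((n-1) + x)
      = (MvPolynomial.C ((n:ℤ)-(k:ℤ)) * X n)^(n-k) := by
    have hc : ∀ x ∈ Finset.range (n-k), F0 ((n-1) + x)
        = MvPolynomial.C ((n:ℤ)-(k:ℤ)) * X n := by
      intro x hx
      rw [Finset.mem_range] at hx
      simp only [hF0]
      rw [dif_pos (show (n-1) + x < 2*n-1 by omega)]
      exact val3 hn hk0 hkn _ (by simp only [Fin.val_mk]; omega) (by simp only [Fin.val_mk]; omega)
    rw [Finset.prod_congr rfl hc, Finset.prod_const, Finset.card_range]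
  have hp3 : ∏ x ∈ Finset.range (k-1), F0 ((n-1) + ((n-k) + x))
      = (MvPolynomial.C (-(k:ℤ)) * X 0)^(k-1) := by
    have hc : ∀ x ∈ Finset.range (k-1), F0 ((n-1) + ((n-k) + x))
        = MvPolynomial.C (-(k:ℤ)) * X 0 := by
      intro x hx
      rw [Finset.mem_range] at hx
      simp only [hF0]
      rw [dif_pos (show (n-1) + ((n-k) + x) < 2*n-1 by omega)]
      exact val4 hn hk0 hkn _ (by simp only [Fin.val_mk]; omega) (by simp only [Fin.val_mk]; omega) (by simp only [Fin.val_mk]; omega)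
    rw [Finset.prod_congr rfl hc, Finset.prod_const, Finset.card_range]
  have hp4 : F0 ((n-1) + ((n-k) + (k-1))) = MvPolynomial.C (k:ℤ) := by
    simp only [hF0]
    rw [dif_pos (show (n-1) + ((n-k) + (k-1)) < 2*n-1 by omega)]
    exact val2 hn hk0 hkn _ (by simp only [Fin.val_mk]; omega)
  rw [hp1, hp2, hp3, hp4, one_mul]

end

section
variable {n k : ℕ} (hn : 2 ≤ n) (hk0 : 0 < k) (hkn : k < n)

include hn hk0 hkn in
lemma det_M0 : ∃ s : ℤ, (s = 1 ∨ s = -1) ∧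
    (M0 n k).det = MvPolynomial.C (s * ((k:ℤ) * ((n:ℤ)-(k:ℤ))^(n-k) * (-(k:ℤ))^(k-1)))
      * (X n ^ (n-k) * X 0 ^ (k-1)) := by
  classical
  refine ⟨((Equiv.Perm.sign (sigma0 n k hn hk0 hkn) : ℤˣ) : ℤ), ?_, ?_⟩
  · obtain hs | hs := Int.units_eq_one_or (Equiv.Perm.sign (sigma0 n k hn hk0 hkn))
    · left; rw [hs]; rfl
    · right; rw [hs]; rfl
  · rw [← Matrix.det_transpose (M0 n k), Matrix.det_apply']
    rw [Finset.sum_eq_single (sigma0 n k hn hk0 hkn)]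
    · simp only [Matrix.transpose_apply]
      rw [prod_M0 hn hk0 hkn, mul_pow, mul_pow, ← map_pow, ← map_pow]
      have hc : (((Equiv.Perm.sign (sigma0 n k hn hk0 hkn) : ℤˣ) : ℤ) : MvPolynomial ℕ ℤ)
          = MvPolynomial.C ((Equiv.Perm.sign (sigma0 n k hn hk0 hkn) : ℤˣ) : ℤ) := by
        simp
      rw [hc, map_mul, map_mul, map_mul]
      ring
    · intro σ _ hσ
      simp only [Matrix.transpose_apply]
      have hz : ∏ i, M0 n k i (σ i) = 0 := by
        by_contra hne
        exact hσ (force hn hk0 hkn σ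
          (fun i hzi => hne (Finset.prod_eq_zero (Finset.mem_univ i) hzi)))
      rw [hz, mul_zero]
    · intro habs
      exact absurd (Finset.mem_univ _) habs

end

section
variable {n k : ℕ} (hn : 2 ≤ n) (hk0 : 0 < k) (hkn : k < n)

include hn hk0 hkn in
lemma entry_phi (i j : Fin (2*n-1)) :
    phi k (Sp n k i j) = Polynomial.C (AM n k i j) + Polynomial.X * Polynomial.C (BM n k i j) := by
  have hilt : (i : ℕ) < 2*n-1 := i.isLt
  have hjlt : (j : ℕ) < 2*n-1 := j.isLt
  by_cases hp : kposP n k i j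
  · simp only [AM, BM, Matrix.of_apply, if_pos hp, map_zero, add_zero, zero_add]
    rcases hp with ⟨h1, h2⟩ | ⟨h1, h2⟩
    · have hb : (i : ℕ) ≤ (j : ℕ) ∧ (j : ℕ) ≤ (i : ℕ) + n := by omega
      have hv : n - ((j : ℕ) - (i : ℕ)) = k := by omega
      simp only [Sp, Matrix.of_apply, if_pos h1, if_pos hb, hv, phi_X_self, if_pos h1]
      simp
    · have hni1 : ¬ ((i : ℕ) < n - 1) := by omega
      have hni2 : ¬ ((i : ℕ) < 2*n - 2) := by omega
      have hb : (i : ℕ) - (n-1) ≤ (j : ℕ) ∧ (j : ℕ) < (i : ℕ) - (n-1) + n := by omega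
      have hv : n - ((j : ℕ) - ((i : ℕ) - (n - 1))) = k := by omega
      simp only [Sp, Matrix.of_apply, if_neg hni1, if_neg hni2, if_pos hb, hv]
      rw [nsmul_C_mul, map_mul, phi_C, phi_X_self]
      ring
  · simp only [AM, BM, Matrix.of_apply, if_neg hp, map_zero, mul_zero, add_zero]
    by_cases hi1 : (i : ℕ) < n - 1
    · simp only [Sp, Matrix.of_apply, if_pos hi1]
      by_cases hb : (i : ℕ) ≤ (j : ℕ) ∧ (j : ℕ) ≤ (i : ℕ) + n
      · rw [if_pos hb]
        apply phi_X_ne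
        intro hv
        apply hp
        left
        exact ⟨hi1, by omega⟩
      · rw [if_neg hb, map_zero, map_zero]
    · by_cases hi2 : (i : ℕ) < 2*n-2
      · simp only [Sp, Matrix.of_apply, if_neg hi1, if_pos hi2]
        by_cases hb : (i : ℕ) - (n-1) ≤ (j : ℕ) ∧ (j : ℕ) ≤ (i : ℕ) - (n-1) + n
        · rw [if_pos hb]
          by_cases hd : (j : ℕ) - ((i : ℕ) - (n-1)) = n - k
          · have hz : (((n - ((j : ℕ) - ((i : ℕ) - (n - 1))) : ℕ) : ℤ) - (k : ℤ)) = 0 := by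
              omega
            rw [hz]
            simp
          · rw [map_mul, phi_C, phi_X_ne, ← Polynomial.C_mul]
            intro hv
            apply hd
            omega
        · rw [if_neg hb, map_zero, map_zero]
      · simp only [Sp, Matrix.of_apply, if_neg hi1, if_neg hi2]
        by_cases hb : (i : ℕ) - (n-1) ≤ (j : ℕ) ∧ (j : ℕ) < (i : ℕ) - (n-1) + n
        · rw [if_pos hb, nsmul_C_mul, map_mul, phi_C, phi_X_ne, ← Polynomial.C_mul]
          intro hv
          apply hp
          right
          constructor
          · omega
          · omega
        · rw [if_neg hb, map_zero, map_zero]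

end

lemma card_FF (n : ℕ) (hn : 2 ≤ n) : (FF n).card = n := by
  have hb : ∀ m ∈ (Finset.range (n-1) ∪ {2*n-2} : Finset ℕ), m < 2*n-1 := by
    intro m hm
    simp only [Finset.mem_union, Finset.mem_range, Finset.mem_singleton] at hm
    omega
  have he : FF n = Finset.attachFin (Finset.range (n-1) ∪ {2*n-2}) hb := by
    ext i
    simp [FF, Finset.mem_attachFin, Finset.mem_union, Finset.mem_range]
    exact or_comm
  rw [he, Finset.card_attachFin, Finset.card_union_of_disjoint]
  · simp only [Finset.card_range, Finset.card_singleton]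
    omega
  · rw [Finset.disjoint_singleton_right, Finset.mem_range]
    omega

section
variable {n k : ℕ} (hn : 2 ≤ n) (hk0 : 0 < k) (hkn : k < n)

include hn hk0 hkn in
lemma phi_det_expand :
    phi k ((sylv n X).det)
      = ∑ I ∈ (FF n).powerset, Polynomial.X ^ I.card *
          Polynomial.C ((Matrix.of fun i j =>
            if i ∈ I then BM n k i j else AM n k i j).det) := by
  rw [← det_Sp n k hn hkn, RingHom.map_det]
  have hmap : (phi k).mapMatrix (Sp n k)
      = Matrix.of fun i j =>
          Polynomial.C (AM n k i j) + Polynomial.X * Polynomial.C (BM n k i j) :=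
    Matrix.ext fun i j => by
      rw [RingHom.mapMatrix_apply, Matrix.map_apply]
      exact entry_phi hn hk0 hkn i j
  rw [hmap, detexp (FF n) (AM n k) (BM n k)]
  intro i hi j
  have hm : ¬((i:ℕ) < n-1 ∨ (i:ℕ) = 2*n-2) := by simpa [FF] using hi
  rw [BM, Matrix.of_apply, if_neg]
  rintro (⟨a,b⟩|⟨a,b⟩) <;> omega

include hn hk0 hkn in
lemma coeff_hi (m : ℕ) (hm : n < m) : (phi k ((sylv n X).det)).coeff m = 0 := by
  rw [phi_det_expand hn hk0 hkn, Polynomial.finset_sum_coeff]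
  apply Finset.sum_eq_zero
  intro I hI
  rw [Finset.mem_powerset] at hI
  have hcard : I.card ≤ n := by
    have := Finset.card_le_card hI
    rwa [card_FF n hn] at this
  rw [mul_comm, Polynomial.coeff_C_mul, Polynomial.coeff_X_pow, if_neg (by omega), mul_zero]

include hn hk0 hkn in
lemma coeff_n : (phi k ((sylv n X).det)).coeff n = (M0 n k).det := by
  rw [phi_det_expand hn hk0 hkn, Polynomial.finset_sum_coeff]
  rw [Finset.sum_eq_single (FF n)]
  · rw [mul_comm, Polynomial.coeff_C_mul, Polynomial.coeff_X_pow,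
      if_pos (card_FF n hn).symm, mul_one]
    rfl
  · intro I hI hne
    rw [Finset.mem_powerset] at hI
    rw [mul_comm, Polynomial.coeff_C_mul, Polynomial.coeff_X_pow, if_neg, mul_zero]
    intro hcard
    exact hne (Finset.eq_of_subset_of_card_le hI (by rw [card_FF n hn]; omega))
  · intro h
    exact absurd (Finset.mem_powerset_self _) h

end

/-- For `0 < k < n`, the discriminant `D_n` of the generic degree-`n`
polynomial has degree exactly `n` in the variable `a_k`, and the (unique) term of `D_n`
containing `a_k^n` is `c · a_n^(n-k-1) a_k^n a_0^(k-1)` for a nonzero integer `c`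
(up to sign `c = ± k^n`, and `c ≠ 0` because `n` has a prime power factor not
dividing `k`). -/
theorem stmt5 (n k : ℕ) (hn : 2 ≤ n) (hk0 : 0 < k) (hkn : k < n) (D : MvPolynomial ℕ ℤ)
    (hD : X n * D = (-1) ^ (n * (n - 1) / 2) * (sylv n X).det) :
    D.degreeOf k = n ∧
      ∃ c : ℤ, c ≠ 0 ∧
        ∀ e : ℕ →₀ ℕ, e k = n →
          D.coeff e =
            (C c * X n ^ (n - k - 1) * X k ^ n * X 0 ^ (k - 1) :
              MvPolynomial ℕ ℤ).coeff e := by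
  classical
  have hTc : ∀ E : ℕ →₀ ℕ, MvPolynomial.coeff E ((sylv n X).det)
      = MvPolynomial.coeff (E.erase k) ((phi k ((sylv n X).det)).coeff (E k)) := by
    intro E
    rw [phi_coeff k _ (E k) (E.erase k) (Finsupp.erase_same), Finsupp.erase_add_single]
  have hDT : ∀ e : ℕ→₀ℕ, MvPolynomial.coeff e D
      = (-1:ℤ)^(n*(n-1)/2) * MvPolynomial.coeff (Finsupp.single n 1 + e) ((sylv n X).det) := by
    intro e
    have h1 := congrArg (MvPolynomial.coeff (Finsupp.single n 1 + e)) hD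
    rw [MvPolynomial.coeff_X_mul] at h1
    rw [h1, show ((-1 : MvPolynomial ℕ ℤ)) ^ (n*(n-1)/2)
        = MvPolynomial.C ((-1:ℤ)^(n*(n-1)/2)) from by rw [map_pow, map_neg, map_one],
      MvPolynomial.coeff_C_mul]
  obtain ⟨s, hs, hM0det⟩ := det_M0 hn hk0 hkn
  set c0 : ℤ := s * ((k:ℤ) * ((n:ℤ)-(k:ℤ))^(n-k) * (-(k:ℤ))^(k-1)) with hc0def
  set c : ℤ := (-1:ℤ)^(n*(n-1)/2) * c0 with hcdef
  have hkZ : (k:ℤ) ≠ 0 := by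
    have : (0:ℤ) < (k:ℤ) := by exact_mod_cast hk0
    omega
  have hnkZ : (n:ℤ) - (k:ℤ) ≠ 0 := by
    have : (k:ℤ) < (n:ℤ) := by exact_mod_cast hkn
    omega
  have hcne : c ≠ 0 := by
    apply mul_ne_zero
    · exact pow_ne_zero _ (by norm_num)
    · apply mul_ne_zero
      · rcases hs with h|h <;> rw [h] <;> norm_num
      · exact mul_ne_zero (mul_ne_zero hkZ (pow_ne_zero _ hnkZ))
          (pow_ne_zero _ (neg_ne_zero.mpr hkZ))
  set u1 : ℕ→₀ℕ := Finsupp.single n (n-k) + Finsupp.single 0 (k-1) with hu1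
  set u2 : ℕ→₀ℕ := Finsupp.single n (n-k-1) + Finsupp.single k n + Finsupp.single 0 (k-1)
    with hu2
  have hM0mon : (M0 n k).det = MvPolynomial.monomial u1 c0 := by
    rw [hM0det, MvPolynomial.X_pow_eq_monomial, MvPolynomial.X_pow_eq_monomial,
      MvPolynomial.monomial_mul, MvPolynomial.C_mul_monomial, ← hu1]
    norm_num
  have hu2k : u2 k = n := by
    simp only [hu2, Finsupp.add_apply, Finsupp.single_apply]
    split_ifs <;> omega
  have hu12 : u1 = (Finsupp.single n 1 + u2).erase k := by
    ext a
    simp only [hu1, hu2, Finsupp.erase_apply, Finsupp.add_apply, Finsupp.single_apply]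
    split_ifs <;> omega
  have hkey : ∀ e : ℕ→₀ℕ, e k = n →
      MvPolynomial.coeff e D = if u2 = e then c else 0 := by
    intro e he
    rw [hDT e, hTc (Finsupp.single n 1 + e)]
    have hEk : ((Finsupp.single n 1 + e : ℕ→₀ℕ)) k = n := by
      simp only [Finsupp.add_apply, Finsupp.single_apply]
      split_ifs <;> omega
    rw [hEk, coeff_n hn hk0 hkn, hM0mon, MvPolynomial.coeff_monomial]
    by_cases h : u2 = e
    · rw [if_pos, if_pos h, hcdef]
      rw [← h]
      exact hu12
    · rw [if_neg, if_neg h, mul_zero]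
      intro habs
      apply h
      have hE2 : ((Finsupp.single n 1 + u2 : ℕ→₀ℕ)) k = n := by
        simp only [Finsupp.add_apply, Finsupp.single_apply]
        split_ifs <;> omega
      have h1 : Finsupp.single n 1 + e = u1 + Finsupp.single k n := by
        conv_lhs => rw [← Finsupp.erase_add_single k (Finsupp.single n 1 + e)]
        rw [hEk, habs]
      have h2 : Finsupp.single n 1 + u2 = u1 + Finsupp.single k n := by
        conv_lhs => rw [← Finsupp.erase_add_single k (Finsupp.single n 1 + u2)]
        rw [hE2, hu12]
      exact add_left_cancel (h2.trans h1.symm)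
  have hRHS : (MvPolynomial.C c * X n ^ (n-k-1) * X k ^ n * X 0 ^ (k-1) : MvPolynomial ℕ ℤ)
      = MvPolynomial.monomial u2 c := by
    rw [MvPolynomial.X_pow_eq_monomial, MvPolynomial.X_pow_eq_monomial,
      MvPolynomial.X_pow_eq_monomial, MvPolynomial.C_mul_monomial,
      MvPolynomial.monomial_mul, MvPolynomial.monomial_mul, mul_one, mul_one, mul_one, hu2]
  constructor
  · apply le_antisymm
    · rw [MvPolynomial.degreeOf_le_iff]
      intro m hm
      by_contra hgt
      push_neg at hgt
      apply MvPolynomial.mem_support_iff.mp hm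
      rw [hDT m, hTc (Finsupp.single n 1 + m)]
      have hEk : ((Finsupp.single n 1 + m : ℕ→₀ℕ)) k = m k := by
        simp only [Finsupp.add_apply, Finsupp.single_apply]
        split_ifs <;> omega
      rw [hEk, coeff_hi hn hk0 hkn (m k) (by omega), MvPolynomial.coeff_zero, mul_zero]
    · by_contra hlt
      push_neg at hlt
      have hmem : u2 ∈ D.support := by
        rw [MvPolynomial.mem_support_iff, hkey u2 hu2k, if_pos rfl]
        exact hcne
      have := (MvPolynomial.degreeOf_lt_iff (by omega)).mp hlt u2 hmem
      omega
  · refine ⟨c, hcne, ?_⟩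
    intro e he
    rw [hkey e he, hRHS, MvPolynomial.coeff_monomial]
end

section
/- Let f(x) = ∑_{i=0}^n a_i x^i over ℂ with a_n ≠ 0, and let s_1, ..., s_{n-1} be the roots of f'. Then the double discriminant with respect to a_0 satisfies DD_{n,0} = n^{2n(n-2)} a_n^{2(n-1)(n-2)} ∏_{i<j} (f(s_i) - f(s_j))^2. -/
/-- The discriminant of the degree-`n` polynomial `∑_{i=0}^n a_i x^i` over `ℂ`,
defined as `(-1)^(n(n-1)/2) Res(f, f') / a_n`. -/
noncomputable def discC (n : ℕ) (a : ℕ → ℂ) : ℂ :=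
  ((-1) ^ (n * (n - 1) / 2) * (sylv n a).det) / a n

open Polynomial Finset Matrix

section sylvAux
variable {R : Type*} [CommRing R]

lemma coeff_sum_C_mul_X_pow (N : ℕ) (u : ℕ → R) {j : ℕ} (hj : j ≤ N) :
    (∑ i ∈ Finset.range (N + 1), C (u i) * X ^ i).coeff j = u j := by
  simp only [C_mul_X_pow_eq_monomial, finset_sum_coeff, coeff_monomial]
  rw [Finset.sum_ite_eq' (range (N + 1)) j u]
  simp [Nat.lt_succ_of_le hj]

lemma natDegree_sum_C_mul_X_pow_le (N : ℕ) (u : ℕ → R) :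
    (∑ i ∈ Finset.range (N + 1), C (u i) * X ^ i).natDegree ≤ N :=
  Polynomial.natDegree_sum_le_of_forall_le _ _ fun i hi =>
    (natDegree_C_mul_X_pow_le (u i) i).trans (by simp at hi; omega)

variable [Nontrivial R]

lemma natDegree_prod_X_sub_C (m : ℕ) (ρ : Fin m → R) :
    (∏ k, (X - C (ρ k))).natDegree = m := by
  rw [Polynomial.natDegree_prod_of_monic _ _ fun i _ => monic_X_sub_C _]
  simp

lemma natDegree_CLprod_le (m : ℕ) (L : R) (ρ : Fin m → R) :
    (C L * ∏ k, (X - C (ρ k))).natDegree ≤ m := by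
  refine (natDegree_mul_le).trans ?_
  simp [natDegree_prod_X_sub_C]

lemma coeff_CLprod_top (m : ℕ) (L : R) (ρ : Fin m → R) :
    (C L * ∏ k, (X - C (ρ k))).coeff m = L := by
  rw [coeff_C_mul]
  have hm : (∏ k, (X - C (ρ k))).Monic :=
    monic_prod_of_monic _ _ fun i _ => monic_X_sub_C _
  have := hm.coeff_natDegree
  rw [natDegree_prod_X_sub_C] at this
  rw [this, mul_one]

lemma eval_CLprod_root (m : ℕ) (L : R) (ρ : Fin m → R) (q : Fin m) :
    (C L * ∏ k, (X - C (ρ k))).eval (ρ q) = 0 := by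
  rw [eval_mul, eval_prod]
  rw [Finset.prod_eq_zero (Finset.mem_univ q) (by simp)]
  ring

lemma row_g (m : ℕ) (L : R) (ρ : Fin m → R) (b : ℕ → R)
    (hb : ∀ e, e ≤ m → b e = (C L * ∏ k, (X - C (ρ k))).coeff e)
    (i : ℕ) (hi : i + 2 ≤ m) (x : R) :
    ∑ j ∈ Finset.range (2 * m - 1),
      (if i ≤ j ∧ j ≤ i + m then b (m - (j - i)) else 0) * x ^ (2 * m - 2 - j)
      = x ^ (m - 2 - i) * (C L * ∏ k, (X - C (ρ k))).eval x := by
  have himg : (Finset.range (m + 1)).image (i + ·) ⊆ Finset.range (2 * m - 1) := by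
    intro j hj
    simp only [Finset.mem_image, Finset.mem_range] at *
    obtain ⟨d, hd, rfl⟩ := hj; omega
  rw [← Finset.sum_subset himg (by
    intro j hj hnj
    rw [if_neg, zero_mul]
    intro ⟨h1, h2⟩
    exact hnj (Finset.mem_image.mpr ⟨j - i, Finset.mem_range.mpr (by omega), by omega⟩))]
  rw [Finset.sum_image (by intro p _ q _ h; simp only at h; omega)]
  rw [eval_eq_sum_range' (Nat.lt_succ_of_le (natDegree_CLprod_le m L ρ)) x, Finset.mul_sum]
  conv_rhs => rw [← Finset.sum_range_reflect]
  refine Finset.sum_congr rfl fun d hd => ?_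
  simp only [Finset.mem_range] at hd
  simp only [Nat.succ_sub_one]
  rw [if_pos (by omega : i ≤ i + d ∧ i + d ≤ i + m)]
  rw [show i + d - i = d by omega, ← hb (m - d) (by omega),
    show 2 * m - 2 - (i + d) = (m - 2 - i) + (m - d) by omega, pow_add]
  ring

lemma row_d (m : ℕ) (hm : 1 ≤ m) (L : R) (ρ : Fin m → R) (b : ℕ → R)
    (hb : ∀ e, e ≤ m → b e = (C L * ∏ k, (X - C (ρ k))).coeff e)
    (s : ℕ) (hs : s + 1 ≤ m) (x : R) :
    ∑ j ∈ Finset.range (2 * m - 1),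
      (if s ≤ j ∧ j < s + m then (m - (j - s)) • b (m - (j - s)) else 0) * x ^ (2 * m - 2 - j)
      = x ^ (m - 1 - s) * (derivative (C L * ∏ k, (X - C (ρ k)))).eval x := by
  have hdeg : (derivative (C L * ∏ k, (X - C (ρ k)))).natDegree < m :=
    lt_of_le_of_lt ((natDegree_derivative_le _).trans
      (Nat.sub_le_sub_right (natDegree_CLprod_le m L ρ) 1)) (by omega)
  have himg : (Finset.range m).image (s + ·) ⊆ Finset.range (2 * m - 1) := by
    intro j hj
    simp only [Finset.mem_image, Finset.mem_range] at *
    obtain ⟨d, hd, rfl⟩ := hj; omega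
  rw [← Finset.sum_subset himg (by
    intro j hj hnj
    rw [if_neg, zero_mul]
    intro ⟨h1, h2⟩
    exact hnj (Finset.mem_image.mpr ⟨j - s, Finset.mem_range.mpr (by omega), by omega⟩))]
  rw [Finset.sum_image (by intro p _ q _ h; simp only at h; omega)]
  rw [eval_eq_sum_range' hdeg x, Finset.mul_sum]
  conv_rhs => rw [← Finset.sum_range_reflect]
  refine Finset.sum_congr rfl fun d hd => ?_
  simp only [Finset.mem_range] at hd
  rw [if_pos (by omega : s ≤ s + d ∧ s + d < s + m)]
  rw [show s + d - s = d by omega, coeff_derivative,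
    ← hb (m - 1 - d + 1) (by omega)]
  rw [nsmul_eq_mul, show m - d = (m - 1 - d) + 1 by omega,
    show 2 * m - 2 - (s + d) = (m - 1 - s) + (m - 1 - d) by omega, pow_add]
  push_cast
  ring

lemma sylv_det_mul (m : ℕ) (hm : 1 ≤ m) (L : R) (ρ : Fin m → R) (b : ℕ → R)
    (hb : ∀ e, e ≤ m → b e = (C L * ∏ k, (X - C (ρ k))).coeff e) :
    (sylv m b).det * (Matrix.of fun s q : Fin m => ρ q ^ (m - 1 - (s : ℕ))).det =
    (L ^ (m - 1) * ∏ q, (derivative (C L * ∏ k, (X - C (ρ k)))).eval (ρ q)) *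
      (Matrix.of fun s q : Fin m => ρ q ^ (m - 1 - (s : ℕ))).det := by
  classical
  set g := C L * ∏ k, (X - C (ρ k)) with hg
  have hNm : (m - 1) + m = 2 * m - 1 := by omega
  set e : Fin (m - 1) ⊕ Fin m ≃ Fin (2 * m - 1) := finSumFinEquiv.trans (finCongr hNm) with he
  set V2 : Matrix (Fin m) (Fin m) R :=
    Matrix.of (fun s q : Fin m => ρ q ^ (m - 1 - (s : ℕ))) with hV2
  set V1 : Matrix (Fin (m - 1)) (Fin m) R :=
    Matrix.of (fun j q => ρ q ^ (2 * m - 2 - (j : ℕ))) with hV1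
  set FB := Matrix.fromBlocks (1 : Matrix (Fin (m - 1)) (Fin (m - 1)) R) V1 0 V2 with hFB
  set colM := FB.submatrix e.symm e.symm with hcolM
  set S' := (sylv m b).submatrix e e with hS'
  have he1 : ∀ k : Fin (m - 1), ((e (Sum.inl k)) : ℕ) = (k : ℕ) := by
    intro k; simp [he, finSumFinEquiv_apply_left]
  have he2 : ∀ s : Fin m, ((e (Sum.inr s)) : ℕ) = (m - 1) + (s : ℕ) := by
    intro s; simp [he, finSumFinEquiv_apply_right]
  set T : Matrix (Fin (m - 1)) (Fin (m - 1)) R :=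
    Matrix.of (fun k k' => S' (Sum.inl k) (Sum.inl k')) with hT
  set D : Matrix (Fin m) (Fin (m - 1)) R :=
    Matrix.of (fun s k => S' (Sum.inr s) (Sum.inl k)) with hD
  set B : Matrix (Fin m) (Fin m) R :=
    Matrix.of (fun s q : Fin m => ρ q ^ (m - 1 - (s : ℕ)) * (derivative g).eval (ρ q)) with hB
  -- the right-column sums
  have hcol : ∀ (p : Fin (m - 1) ⊕ Fin m) (q' : Fin m),
      (∑ r, S' p r * FB r (Sum.inr q')) = ∑ j ∈ Finset.range (2 * m - 1),
        (if ((e p) : ℕ) < m - 1 then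
          (if ((e p) : ℕ) ≤ j ∧ j ≤ ((e p) : ℕ) + m then b (m - (j - ((e p) : ℕ))) else 0)
        else
          (if ((e p) : ℕ) - (m - 1) ≤ j ∧ j < ((e p) : ℕ) - (m - 1) + m then
            (m - (j - (((e p) : ℕ) - (m - 1)))) • b (m - (j - (((e p) : ℕ) - (m - 1))))
          else 0)) * ρ q' ^ (2 * m - 2 - j) := by
    intro p q'
    rw [← Fin.sum_univ_eq_sum_range]
    refine Fintype.sum_equiv e _ _ fun r => ?_
    rcases r with j | j
    · simp only [hS', Matrix.submatrix_apply, hFB, Matrix.fromBlocks_apply₁₂, hV1,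
        Matrix.of_apply, sylv, he1]
    · have hx : 2 * m - 2 - ((m - 1) + (j : ℕ)) = m - 1 - (j : ℕ) := by omega
      simp only [hS', Matrix.submatrix_apply, hFB, Matrix.fromBlocks_apply₂₂, hV2,
        Matrix.of_apply, sylv, he2, hx]
  -- step 2 : the block structure of S' * FB
  have hstep2 : S' * FB = Matrix.fromBlocks T 0 D B := by
    ext p q
    rcases p with k | s <;> rcases q with k' | q'
    · simp [Matrix.mul_apply, Fintype.sum_sum_type, hFB, Matrix.one_apply, mul_ite,
        Finset.sum_ite_eq', hT]
    · rw [Matrix.mul_apply, hcol (Sum.inl k) q']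
      have hk : ((e (Sum.inl k)) : ℕ) < m - 1 := by rw [he1]; exact k.isLt
      simp only [if_pos hk, Matrix.fromBlocks_apply₁₂, Matrix.zero_apply]
      rw [he1, row_g m L ρ b hb (k : ℕ) (by omega) (ρ q')]
      rw [← hg, eval_CLprod_root m L ρ q', mul_zero]
    · simp [Matrix.mul_apply, Fintype.sum_sum_type, hFB, Matrix.one_apply, mul_ite,
        Finset.sum_ite_eq', hD]
    · rw [Matrix.mul_apply, hcol (Sum.inr s) q']
      have hk : ¬ ((e (Sum.inr s)) : ℕ) < m - 1 := by rw [he2]; omega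
      simp only [if_neg hk, Matrix.fromBlocks_apply₂₂]
      rw [he2, show (m - 1) + (s : ℕ) - (m - 1) = (s : ℕ) by omega,
        row_d m hm L ρ b hb (s : ℕ) (by omega) (ρ q')]
      simp only [hB, Matrix.of_apply, hg]
  -- determinants of the blocks
  have hdetT : T.det = L ^ (m - 1) := by
    have htri : T.BlockTriangular id := by
      intro i j hij
      simp only [hT, Matrix.of_apply, hS', Matrix.submatrix_apply, sylv]
      rw [if_pos (by rw [he1]; exact i.isLt), if_neg (by
        rw [he1, he1]
        simp only [id] at hij
        rw [Fin.lt_def] at hij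
        omega)]
    rw [Matrix.det_of_upperTriangular htri]
    have hdiag : ∀ k : Fin (m - 1), T k k = L := by
      intro k
      simp only [hT, Matrix.of_apply, hS', Matrix.submatrix_apply, sylv]
      rw [if_pos (by rw [he1]; exact k.isLt), if_pos (by omega)]
      simp only [Nat.sub_self, Nat.sub_zero]
      rw [hb m le_rfl, hg]
      exact coeff_CLprod_top m L ρ
    rw [Finset.prod_congr rfl fun k _ => hdiag k]
    simp
  have hdetB : B.det = V2.det * ∏ q, (derivative g).eval (ρ q) := by
    have : B = V2 * Matrix.diagonal (fun q => (derivative g).eval (ρ q)) := by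
      ext s q
      rw [Matrix.mul_diagonal]
      rfl
    rw [this, Matrix.det_mul, Matrix.det_diagonal]
  have hdetM : colM.det = V2.det := by
    rw [hcolM, Matrix.det_submatrix_equiv_self, hFB, Matrix.det_fromBlocks_zero₂₁,
      Matrix.det_one, one_mul]
  have hsylv_eq : sylv m b = S'.submatrix e.symm e.symm := by
    rw [hS', Matrix.submatrix_submatrix]
    simp [Matrix.submatrix_id_id]
  calc (sylv m b).det * V2.det
      = (sylv m b).det * colM.det := by rw [hdetM]
    _ = (sylv m b * colM).det := (Matrix.det_mul _ _).symm
    _ = ((S' * FB).submatrix e.symm e.symm).det := by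
        rw [hcolM]
        conv_lhs => rw [hsylv_eq]
        rw [Matrix.submatrix_mul_equiv]
    _ = (S' * FB).det := Matrix.det_submatrix_equiv_self _ _
    _ = (Matrix.fromBlocks T 0 D B).det := by rw [hstep2]
    _ = T.det * B.det := Matrix.det_fromBlocks_zero₁₂ _ _ _
    _ = (L ^ (m - 1) * ∏ q, (derivative g).eval (ρ q)) * V2.det := by
        rw [hdetT, hdetB]; ring

end sylvAux

lemma sylv_det_eq (m : ℕ) (hm : 1 ≤ m) (L : ℂ) (ρ : Fin m → ℂ) (b : ℕ → ℂ)
    (hb : ∀ e, e ≤ m → b e = (C L * ∏ k, (X - C (ρ k))).coeff e) :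
    (sylv m b).det
      = L ^ (m - 1) * ∏ q, (derivative (C L * ∏ k, (X - C (ρ k)))).eval (ρ q) := by
  classical
  let A := MvPolynomial (Option (Fin m)) ℤ
  let LA : A := MvPolynomial.X none
  let ρA : Fin m → A := fun i => MvPolynomial.X (some i)
  let bA : ℕ → A := fun e => (C LA * ∏ k, (X - C (ρA k))).coeff e
  have hA := sylv_det_mul (R := A) m hm LA ρA bA (fun e _ => rfl)
  have hVne : (Matrix.of fun s q : Fin m => ρA q ^ (m - 1 - (s : ℕ))).det ≠ 0 := by
    have hform : (Matrix.of fun s q : Fin m => ρA q ^ (m - 1 - (s : ℕ)))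
        = ((Matrix.vandermonde ρA)ᵀ).submatrix (⇑(Fin.revPerm : Equiv.Perm (Fin m))) id := by
      ext s q
      simp only [Matrix.of_apply, Matrix.submatrix_apply, Matrix.transpose_apply,
        Matrix.vandermonde_apply, id_eq]
      have hv : ((Fin.revPerm s : Fin m) : ℕ) = m - 1 - (s : ℕ) := by
        simp only [Fin.revPerm_apply, Fin.val_rev]
        omega
      rw [hv]
    rw [hform, Matrix.det_permute, Matrix.det_transpose, Matrix.det_vandermonde]
    apply mul_ne_zero
    · exact Int.cast_ne_zero.mpr (Units.ne_zero _)
    · rw [Finset.prod_ne_zero_iff]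
      intro i _
      rw [Finset.prod_ne_zero_iff]
      intro j hj
      rw [Finset.mem_Ioi] at hj
      refine sub_ne_zero.mpr fun hEq => ?_
      have := MvPolynomial.X_injective hEq
      simp only [Option.some.injEq] at this
      exact absurd (this ▸ hj) (lt_irrefl _)
  have hgen := mul_right_cancel₀ hVne hA
  let φ : A →+* ℂ :=
    (MvPolynomial.aeval fun o : Option (Fin m) => o.elim L ρ).toRingHom
  have hφL : φ LA = L := by exact MvPolynomial.aeval_X _ _
  have hφρ : ∀ i, φ (ρA i) = ρ i := fun i => MvPolynomial.aeval_X _ _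
  have hmap : (C LA * ∏ k, (X - C (ρA k))).map φ = C L * ∏ k, (X - C (ρ k)) := by
    rw [Polynomial.map_mul, Polynomial.map_prod, map_C, hφL]
    congr 1
    refine Finset.prod_congr rfl fun k _ => ?_
    rw [Polynomial.map_sub, Polynomial.map_X, map_C, hφρ]
  have hφb : ∀ e, e ≤ m → φ (bA e) = b e := by
    intro e hee
    rw [hb e hee, ← hmap, Polynomial.coeff_map]
  have hsylvmap : sylv m b = φ.mapMatrix (sylv m bA) := by
    ext i j
    simp only [RingHom.mapMatrix_apply, Matrix.map_apply, sylv, Matrix.of_apply]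
    split_ifs with h1 h2 h3
    · exact (hφb _ (by omega)).symm
    · exact (map_zero φ).symm
    · rw [map_nsmul, hφb _ (by omega)]
    · exact (map_zero φ).symm
  rw [hsylvmap, ← RingHom.map_det, hgen, _root_.map_mul, map_pow, hφL, map_prod]
  congr 1
  refine Finset.prod_congr rfl fun q _ => ?_
  rw [← Polynomial.eval₂_hom, ← Polynomial.eval_map, ← Polynomial.derivative_map, hmap, hφρ]

lemma eval_derivative_CLprod (m : ℕ) (L : ℂ) (ρ : Fin m → ℂ) (q : Fin m) :
    (derivative (C L * ∏ k, (X - C (ρ k)))).eval (ρ q)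
      = L * ∏ k ∈ Finset.univ.erase q, (ρ q - ρ k) := by
  classical
  rw [Polynomial.derivative_C_mul, eval_mul, eval_C]
  congr 1
  have h1 : (∏ k, (X - C (ρ k))) = Lagrange.nodal Finset.univ ρ := rfl
  rw [h1, Lagrange.eval_nodal_derivative_eval_node_eq (Finset.mem_univ q),
    Lagrange.eval_nodal]

lemma prod_erase_sq (m : ℕ) (v : Fin m → ℂ) :
    ∏ q, ∏ k ∈ Finset.univ.erase q, (v q - v k)
      = (-1) ^ (m * (m - 1) / 2) * ∏ i, ∏ j ∈ Finset.Ioi i, (v i - v j) ^ 2 := by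
  classical
  have herase : ∀ q : Fin m, Finset.univ.erase q = Finset.Iio q ∪ Finset.Ioi q := by
    intro q; ext k
    simp only [Finset.mem_erase, Finset.mem_union, Finset.mem_Iio, Finset.mem_Ioi,
      Finset.mem_univ, and_true]
    constructor
    · exact fun h => h.lt_or_gt
    · rintro (h | h) <;> exact (by omega : (k : ℕ) ≠ (q : ℕ)) ∘ (congrArg Fin.val) <;> skip
  have hdisj : ∀ q : Fin m, Disjoint (Finset.Iio q) (Finset.Ioi q) := by
    intro q
    exact (Finset.disjoint_Ioi_Iio q).symm
  calc ∏ q, ∏ k ∈ Finset.univ.erase q, (v q - v k)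
      = ∏ q, ((∏ k ∈ Finset.Iio q, (v q - v k)) * ∏ k ∈ Finset.Ioi q, (v q - v k)) := by
        refine Finset.prod_congr rfl fun q _ => ?_
        rw [herase q, Finset.prod_union (hdisj q)]
    _ = (∏ q, ∏ k ∈ Finset.Iio q, (v q - v k)) * ∏ q, ∏ k ∈ Finset.Ioi q, (v q - v k) :=
        Finset.prod_mul_distrib
    _ = (∏ q, ∏ k ∈ Finset.Ioi q, (v k - v q)) * ∏ q, ∏ k ∈ Finset.Ioi q, (v q - v k) := by
        congr 1
        refine Finset.prod_comm' fun x y => ?_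
        simp only [Finset.mem_Iio, Finset.mem_Ioi, Finset.mem_univ, true_and, and_true]
    _ = ∏ q, ∏ k ∈ Finset.Ioi q, ((-1) * (v q - v k) ^ 2) := by
        rw [← Finset.prod_mul_distrib]
        refine Finset.prod_congr rfl fun q _ => ?_
        rw [← Finset.prod_mul_distrib]
        refine Finset.prod_congr rfl fun k _ => ?_
        ring
    _ = (-1) ^ (m * (m - 1) / 2) * ∏ i, ∏ j ∈ Finset.Ioi i, (v i - v j) ^ 2 := by
        rw [Finset.prod_congr rfl fun q (_ : q ∈ Finset.univ) => Finset.prod_mul_distrib]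
        rw [Finset.prod_mul_distrib]
        congr 1
        rw [Finset.prod_congr rfl fun (q : Fin m) (_ : q ∈ Finset.univ) =>
          (Finset.prod_const (-1 : ℂ))]
        rw [Finset.prod_congr rfl fun (q : Fin m) (_ : q ∈ Finset.univ) =>
          (by rw [Fin.card_Ioi] : (-1 : ℂ) ^ (Finset.Ioi q).card = (-1) ^ (m - 1 - (q : ℕ)))]
        rw [Finset.prod_pow_eq_pow_sum]
        congr 1
        rw [Fin.sum_univ_eq_sum_range (fun j => m - 1 - j) m]
        rw [← Finset.sum_range_reflect]
        rw [Finset.sum_congr rfl fun j hj =>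
          (by simp only [Finset.mem_range] at hj; omega : m - 1 - (m - 1 - j) = j)]
        exact Finset.sum_range_id m

lemma multiset_exists_fin (M : Multiset ℂ) (n : ℕ) (h : M.card = n) :
    ∃ ρ : Fin n → ℂ, ∀ F : ℂ → ℂ[X], (M.map F).prod = ∏ i, F (ρ i) := by
  have hl : M.toList.length = n := by rw [Multiset.length_toList, h]
  refine ⟨fun i => M.toList.get (Fin.cast hl.symm i), fun F => ?_⟩
  conv_lhs => rw [← Multiset.coe_toList M]
  rw [Multiset.map_coe, Multiset.prod_coe]
  conv_lhs => rw [← List.ofFn_get M.toList, List.map_ofFn, List.prod_ofFn]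
  exact Fintype.prod_equiv (finCongr hl) _ _ fun i => by simp

lemma appA (n : ℕ) (hn : 2 ≤ n) (a : ℕ → ℂ) (han : a n ≠ 0) (s : Fin (n - 1) → ℂ)
    (f : ℂ[X]) (hf : f = ∑ i ∈ Finset.range (n + 1), C (a i) * X ^ i)
    (hder : f.derivative = C ((n : ℂ) * a n) * ∏ i, (X - C (s i))) (t : ℂ) :
    discC n (Function.update a 0 t)
      = ((-1) ^ (n * (n - 1) / 2) * (n : ℂ) ^ n * a n ^ (n - 1)) *
        ∏ k, (t - (a 0 - f.eval (s k))) := by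
  classical
  set u := Function.update a 0 t with hu
  set ft : ℂ[X] := ∑ i ∈ Finset.range (n + 1), C (u i) * X ^ i with hft
  have hun : u n = a n := Function.update_of_ne (by omega) _ _
  have hcoeff : ∀ j, j ≤ n → ft.coeff j = u j := fun j hj => coeff_sum_C_mul_X_pow n u hj
  have hdegle : ft.natDegree ≤ n := natDegree_sum_C_mul_X_pow_le n u
  have hft_f : ft = f + C (t - a 0) := by
    rw [hft, hf]
    have h0 : (0 : ℕ) ∈ Finset.range (n + 1) := by simp
    rw [← Finset.sum_erase_add _ _ h0, ← Finset.sum_erase_add _ _ h0]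
    have hsum : ∑ i ∈ (Finset.range (n + 1)).erase 0, C (u i) * X ^ i
        = ∑ i ∈ (Finset.range (n + 1)).erase 0, C (a i) * X ^ i :=
      Finset.sum_congr rfl fun i hi => by
        rw [Finset.mem_erase] at hi
        rw [hu, Function.update_of_ne hi.1]
    rw [hsum, hu, Function.update_self, map_sub]
    ring
  have hderft : derivative ft = C ((n : ℂ) * a n) * ∏ i, (X - C (s i)) := by
    rw [hft_f, derivative_add, derivative_C, add_zero, hder]
  have hlead : ft.coeff n = a n := by rw [hcoeff n le_rfl, hun]
  have hdeg : ft.natDegree = n :=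
    le_antisymm hdegle (le_natDegree_of_ne_zero (by rw [hlead]; exact han))
  have hsplit : ft = C (a n) * (ft.roots.map fun r => X - C r).prod := by
    have h2 := Splits.eq_prod_roots (IsAlgClosed.splits ft)
    rwa [Polynomial.leadingCoeff, hdeg, hlead] at h2
  have hcard : ft.roots.card = n := by
    rw [(Polynomial.splits_iff_card_roots).mp (IsAlgClosed.splits ft), hdeg]
  obtain ⟨ρ, hρ⟩ := multiset_exists_fin ft.roots n hcard
  have hsplit2 : ft = C (a n) * ∏ i, (X - C (ρ i)) := by rw [hsplit, hρ]
  have hdet := sylv_det_eq n (by omega) (a n) ρ u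
    (fun e he => by rw [← hsplit2, hcoeff e he])
  have hdd : derivative (C (a n) * ∏ i, (X - C (ρ i)))
      = C ((n : ℂ) * a n) * ∏ i, (X - C (s i)) := by rw [← hsplit2, hderft]
  rw [hdd] at hdet
  have heval : ∀ q : Fin n, (C ((n : ℂ) * a n) * ∏ i, (X - C (s i))).eval (ρ q)
      = (n : ℂ) * a n * ∏ k, (ρ q - s k) := by
    intro q; rw [eval_mul, eval_C, eval_prod]; simp
  rw [Finset.prod_congr rfl (fun q _ => heval q), Finset.prod_mul_distrib,
    Finset.prod_const, Finset.card_univ, Fintype.card_fin, Finset.prod_comm] at hdet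
  -- hdet : det = a n ^ (n-1) * ((n * a n)^n * ∏_k ∏_q (ρ q - s k))
  have hk : ∀ k : Fin (n - 1), a n * ∏ q, (ρ q - s k) = (-1) ^ n * ft.eval (s k) := by
    intro k
    rw [hsplit2, eval_mul, eval_C, eval_prod]
    simp only [eval_sub, eval_X, eval_C]
    rw [Finset.prod_congr rfl (fun q _ => (by ring : ρ q - s k = (-1) * (s k - ρ q))),
      Finset.prod_mul_distrib, Finset.prod_const, Finset.card_univ, Fintype.card_fin]
    ring
  have hdet2 : (sylv n u).det = ((n : ℂ) * a n) ^ n * ∏ k, ((-1) ^ n * ft.eval (s k)) := by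
    rw [hdet]
    rw [Finset.prod_congr rfl fun k _ => (hk k).symm]
    rw [Finset.prod_mul_distrib, Finset.prod_const, Finset.card_univ, Fintype.card_fin]
    ring
  have hneg : ((-1 : ℂ) ^ n) ^ (n - 1) = 1 := by
    rw [← pow_mul]
    refine Even.neg_one_pow ?_
    rcases Nat.even_or_odd n with h | h
    · exact h.mul_right _
    · exact (Nat.Odd.sub_odd h odd_one).mul_left _
  have hdet3 : (sylv n u).det = (n : ℂ) ^ n * a n ^ n * ∏ k, ft.eval (s k) := by
    rw [hdet2, Finset.prod_mul_distrib, Finset.prod_const, Finset.card_univ, Fintype.card_fin,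
      hneg, mul_pow]
    ring
  have hev : ∀ k : Fin (n - 1), ft.eval (s k) = t - (a 0 - f.eval (s k)) := by
    intro k; rw [hft_f, eval_add, eval_C]; ring
  rw [discC, hdet3, hun, Finset.prod_congr rfl fun k _ => hev k]
  rw [div_eq_iff han]
  rw [show (a n) ^ n = a n ^ (n - 1) * a n by rw [← pow_succ]; congr 1; omega]
  ring

open Polynomial in
/-- Let `f = ∑_{i=0}^n a_i x^i` over `ℂ` with `a_n ≠ 0`, and let
`s_1, …, s_{n-1}` be the roots of `f'`.  Let `D(t) = disc_x(f)` with `a_0`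
replaced by `t`, a polynomial of degree `n - 1` in `t` with coefficients `c_j`, and
let `DD = DD_{n,0} = disc_{a_0}(disc_x f)` (characterized by
`c_{n-1} · DD = ± Res(D, D')`).  Then
`DD = n^(2n(n-2)) a_n^(2(n-1)(n-2)) ∏_{i<j} (f(s_i) - f(s_j))^2`. -/
theorem stmt14 (n : ℕ) (hn : 2 ≤ n) (a : ℕ → ℂ) (han : a n ≠ 0) (s : Fin (n - 1) → ℂ)
    (f : ℂ[X]) (hf : f = ∑ i ∈ Finset.range (n + 1), C (a i) * X ^ i)
    (hder : f.derivative = C ((n : ℂ) * a n) * ∏ i, (X - C (s i)))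
    (c : ℕ → ℂ)
    (hc : ∀ t : ℂ, discC n (Function.update a 0 t) = ∑ j ∈ Finset.range n, c j * t ^ j)
    (DD : ℂ)
    (hDD : c (n - 1) * DD = (-1) ^ ((n - 1) * (n - 2) / 2) * (sylv (n - 1) c).det) :
    DD = (n : ℂ) ^ (2 * n * (n - 2)) * a n ^ (2 * (n - 1) * (n - 2)) *
      ∏ i, ∏ j ∈ Finset.Ioi i, (f.eval (s i) - f.eval (s j)) ^ 2 := by
  classical
  set K : ℂ := (-1) ^ (n * (n - 1) / 2) * (n : ℂ) ^ n * a n ^ (n - 1) with hK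
  set ρ' : Fin (n - 1) → ℂ := fun k => a 0 - f.eval (s k) with hρ'
  have hKne : K ≠ 0 := by
    rw [hK]
    refine mul_ne_zero (mul_ne_zero ?_ ?_) ?_
    · exact pow_ne_zero _ (neg_ne_zero.mpr one_ne_zero)
    · exact pow_ne_zero _ (Nat.cast_ne_zero.mpr (by omega))
    · exact pow_ne_zero _ han
  set Pr : ℂ[X] := C K * ∏ k, (X - C (ρ' k)) with hPr
  have heqPl : (∑ j ∈ Finset.range n, C (c j) * X ^ j) = Pr := by
    apply Polynomial.funext
    intro t
    have h1 := appA n hn a han s f hf hder t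
    rw [hc t] at h1
    calc (∑ j ∈ Finset.range n, C (c j) * X ^ j).eval t
        = ∑ j ∈ Finset.range n, c j * t ^ j := by
          rw [Polynomial.eval_finset_sum]
          exact Finset.sum_congr rfl fun j _ => by rw [eval_mul, eval_C, eval_pow, eval_X]
      _ = K * ∏ k, (t - ρ' k) := by simp only [hK, hρ']; linear_combination h1
      _ = Pr.eval t := by
          rw [hPr, eval_mul, eval_C, eval_prod]
          exact congrArg _ (Finset.prod_congr rfl fun k _ => by
            rw [eval_sub, eval_X, eval_C])
  have hcoe : ∀ e, e ≤ n - 1 → c e = Pr.coeff e := by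
    intro e he
    rw [← heqPl]
    have h2 : (range n) = range ((n - 1) + 1) := by congr 1; omega
    rw [h2, coeff_sum_C_mul_X_pow (n - 1) c he]
  have hdet := sylv_det_eq (n - 1) (by omega) K ρ' c (fun e he => by rw [hcoe e he, hPr])
  rw [Finset.prod_congr rfl fun q (_ : q ∈ Finset.univ) => eval_derivative_CLprod (n - 1) K ρ' q,
    Finset.prod_mul_distrib, Finset.prod_const, Finset.card_univ, Fintype.card_fin,
    prod_erase_sq (n - 1) ρ'] at hdet
  have hcK : c (n - 1) = K := by
    rw [hcoe (n - 1) le_rfl, hPr, coeff_CLprod_top]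
  rw [hcK, hdet, show n - 1 - 1 = n - 2 by omega] at hDD
  set S : ℂ := ∏ i, ∏ j ∈ Finset.Ioi i, (ρ' i - ρ' j) ^ 2 with hS
  have hDD2 : K * DD = K * (K ^ (2 * n - 4) * S) := by
    rw [hDD]
    have hsign : ((-1 : ℂ) ^ ((n - 1) * (n - 2) / 2)) * ((-1 : ℂ) ^ ((n - 1) * (n - 2) / 2))
        = 1 := by
      rw [← pow_add]
      exact Even.neg_one_pow ⟨_, rfl⟩
    have hKpow : K ^ (n - 2) * K ^ (n - 1) = K * K ^ (2 * n - 4) := by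
      rw [← pow_add, ← pow_succ']
      congr 1
      omega
    calc (-1 : ℂ) ^ ((n - 1) * (n - 2) / 2) *
          (K ^ (n - 2) * (K ^ (n - 1) * ((-1) ^ ((n - 1) * (n - 2) / 2) * S)))
        = (((-1 : ℂ) ^ ((n - 1) * (n - 2) / 2)) * ((-1 : ℂ) ^ ((n - 1) * (n - 2) / 2)))
            * ((K ^ (n - 2) * K ^ (n - 1)) * S) := by ring
      _ = K * (K ^ (2 * n - 4) * S) := by rw [hsign, hKpow]; ring
  have hDD3 : DD = K ^ (2 * n - 4) * S := mul_left_cancel₀ hKne hDD2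
  have h24 : 2 * n - 4 = 2 * (n - 2) := by omega
  have hs1 : ((-1 : ℂ) ^ (n * (n - 1) / 2)) ^ (2 * n - 4) = 1 := by
    rw [← pow_mul]
    exact Even.neg_one_pow (Even.mul_left ⟨n - 2, by omega⟩ _)
  have hs2 : ((n : ℂ) ^ n) ^ (2 * n - 4) = (n : ℂ) ^ (2 * n * (n - 2)) := by
    rw [← pow_mul]
    congr 1
    rw [h24]; ring
  have hs3 : (a n ^ (n - 1)) ^ (2 * n - 4) = a n ^ (2 * (n - 1) * (n - 2)) := by
    rw [← pow_mul]
    congr 1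
    rw [h24]; ring
  have hSf : S = ∏ i, ∏ j ∈ Finset.Ioi i, (f.eval (s i) - f.eval (s j)) ^ 2 := by
    rw [hS]
    refine Finset.prod_congr rfl fun i _ => Finset.prod_congr rfl fun j _ => ?_
    rw [hρ']
    ring
  rw [hDD3, hSf, hK, mul_pow, mul_pow, hs1, hs2, hs3, one_mul]
end
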